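/- arXiv:1301.6921 — 14 statements merged into one kernel-verified Lean document; each statement's English description precedes it below -/
import Mathlib

section
/- For any nonempty finite index set C of binary causes, any nonempty population Ω, and any family of potential outcomes D(C;Ω) (i.e., for each ω ∈ Ω a function c ↦ D_c(ω) ∈ {0,1} defined on all assignments c : C → {0,1}), there exists a sufficient cause representation (A, 𝔅) for D(C;Ω). -/
/-- An assignment of values to the binary causes indexed by `ι`. -/
abbrev Assign (ι : Type*) := ι → Bool

/-- A conjunction of literals over `ι`: a partial assignment, where `B i = some v`
means the literal at coordinate `i` has target value `v`, and `B i = none` means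
`i` is not in the domain of the conjunction. -/
abbrev Conj (ι : Type*) := ι → Option Bool

/-- An assignment `c` satisfies a conjunction of literals `B`. -/
def Satisfies {ι : Type*} (c : Assign ι) (B : Conj ι) : Prop :=
  ∀ i v, B i = some v → c i = v

/-- `B'` extends `B` : the domain of `B'` contains that of `B` and they agree there. -/
def ConjExtends {ι : Type*} (B B' : Conj ι) : Prop :=
  ∀ i v, B i = some v → B' i = some v

/-- `(A, 𝔅)` is a sufficient cause representation for the family of potential
outcomes `D`. -/
def IsRepresentation {ι Ω : Type*} (D : Ω → Assign ι → Bool)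
    {p : ℕ} (A : Fin p → Ω → Bool) (𝔅 : Fin p → Conj ι) : Prop :=
  ∀ (ω : Ω) (c : Assign ι),
    D ω c = true ↔ ∃ j, A j ω = true ∧ Satisfies c (𝔅 j)

/-- `B` is irreducible for `D(C, Ω)`: every sufficient cause representation
contains some conjunction extending `B`. -/
def IrreducibleConj {ι Ω : Type*} (D : Ω → Assign ι → Bool) (B : Conj ι) : Prop :=
  ∀ (p : ℕ) (A : Fin p → Ω → Bool) (𝔅 : Fin p → Conj ι),
    IsRepresentation D A 𝔅 → ∃ j, ConjExtends B (𝔅 j)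

/-- `B` is a sufficient cause for `D` for the individual `ω`. -/
def SuffCauseFor {ι Ω : Type*} (D : Ω → Assign ι → Bool) (B : Conj ι) (ω : Ω) : Prop :=
  ∀ c : Assign ι, Satisfies c B → D ω c = true

/-- `B` is a minimal sufficient cause for `D` for `ω`: it is a sufficient cause,
but no restriction of `B` to a proper subset of its domain is. -/
def MinSuffCauseFor {ι Ω : Type*} (D : Ω → Assign ι → Bool) (B : Conj ι) (ω : Ω) : Prop :=
  SuffCauseFor D B ω ∧
    ∀ B' : Conj ι, ConjExtends B' B → B' ≠ B → ¬ SuffCauseFor D B' ω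

/-- `B` is a singular (minimal sufficient) cause for `ω`: it is the unique minimal
sufficient cause for `ω`. -/
def SingularFor {ι Ω : Type*} (D : Ω → Assign ι → Bool) (B : Conj ι) (ω : Ω) : Prop :=
  MinSuffCauseFor D B ω ∧ ∀ B' : Conj ι, B' ≠ B → ¬ MinSuffCauseFor D B' ω

/-- `B` is singular for `D(C, Ω)`: it is singular for some individual. -/
def Singular {ι Ω : Type*} (D : Ω → Assign ι → Bool) (B : Conj ι) : Prop :=
  ∃ ω : Ω, SingularFor D B ω

/-- The literal at coordinate `i` with target value `v` has a positive monotonic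
effect on `D` relative to `C`. -/
def PosMonotone {ι Ω : Type*} [DecidableEq ι] (D : Ω → Assign ι → Bool)
    (i : ι) (v : Bool) : Prop :=
  ∀ (ω : Ω) (c : Assign ι),
    D ω (Function.update c i (!v)) = true → D ω (Function.update c i v) = true

/-- `T` is a tree on the finite vertex set `V`: a set of unordered pairs of
distinct elements of `V` with `|T| = |V| - 1` such that any two vertices of `V`
are connected by a path of edges of `T`. -/
def IsTreeOn {ι : Type*} (V : Finset ι) (T : Finset (Sym2 ι)) : Prop :=
  (∀ e ∈ T, ¬ e.IsDiag ∧ ∀ i ∈ e, i ∈ V) ∧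
  T.card = V.card - 1 ∧
  (∀ x ∈ V, ∀ y ∈ V, Relation.ReflTransGen (fun a b => s(a, b) ∈ T) x y)


/-- Theorem 2.1: for any family of potential outcomes over a
nonempty finite index set of binary causes and a nonempty population, a
sufficient cause representation exists. -/
theorem representation_exists {ι Ω : Type*} [Fintype ι] [Nonempty ι] [Nonempty Ω]
    (D : Ω → Assign ι → Bool) :
    ∃ (p : ℕ) (A : Fin p → Ω → Bool) (𝔅 : Fin p → Conj ι),
      IsRepresentation D A 𝔅 := by
  classical
  let e := (Fintype.equivFin (Assign ι)).symm
  refine ⟨Fintype.card (Assign ι), fun j ω => D ω (e j), fun j i => some (e j i), ?_⟩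
  intro ω c
  constructor
  · intro h
    refine ⟨e.symm c, ?_, ?_⟩
    · simpa using h
    · intro i v hv
      simp at hv
      simp [hv]
  · rintro ⟨j, hA, hs⟩
    have : c = e j := funext fun i => hs i (e j i) rfl
    rwa [this]
end

section
/- Let C = C₁ ⊔ C₂ be a partition of C and let B be a conjunction of literals with domain exactly C₁ (one literal per element of C₁, with target values b : C₁ → {0,1}). Then B is irreducible for D(C,Ω) if and only if there exist ω* ∈ Ω and an assignment c₂* : C₂ → {0,1} such that: (i) D evaluated at the assignment equal to b on C₁ and c₂* on C₂ equals 1 for ω*; and (ii) for every i ∈ C₁, D evaluated at the assignment equal to b on C₁ \ {i}, equal to 1 − b(i) at i, and equal to c₂* on C₂, equals 0 for ω*. -/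
section AuxIrred

variable {ι Ω : Type*} [Fintype ι] [DecidableEq ι]

open Classical in
/-- Auxiliary conjunctions for the canonical representation avoiding `B`. -/
noncomputable def auxB (C₁ : Finset ι) (b : ι → Bool) :
    (Assign ι ⊕ Assign ι × ι) → Conj ι
  | .inl c => if ∀ k ∈ C₁, c k = b k then (fun _ => none) else (fun k => some (c k))
  | .inr (c, i) => if (∀ k ∈ C₁, c k = b k) ∧ i ∈ C₁ then
      (fun k => if k = i then none else some (c k)) else (fun _ => none)

open Classical in
/-- Auxiliary indicator functions for the canonical representation avoiding `B`. -/
noncomputable def auxA (D : Ω → Assign ι → Bool) (C₁ : Finset ι) (b : ι → Bool) :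
    (Assign ι ⊕ Assign ι × ι) → Ω → Bool
  | .inl c => fun ω => if ∀ k ∈ C₁, c k = b k then false else D ω c
  | .inr (c, i) => fun ω => if (∀ k ∈ C₁, c k = b k) ∧ i ∈ C₁ then
      D ω c && D ω (Function.update c i (!(b i))) else false

end AuxIrred

/-- Theorem 3.1: characterization of irreducibility in terms of
potential outcomes. -/
theorem irreducibleConj_iff {ι Ω : Type*} [Fintype ι] [DecidableEq ι] [Nonempty ι] [Nonempty Ω]
    (D : Ω → Assign ι → Bool) (C₁ C₂ : Finset ι)
    (hdisj : Disjoint C₁ C₂) (hunion : C₁ ∪ C₂ = Finset.univ)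
    (b : ι → Bool) :
    IrreducibleConj D (fun i => if i ∈ C₁ then some (b i) else none) ↔
      ∃ (ω : Ω) (c₂ : ι → Bool),
        D ω (fun i => if i ∈ C₁ then b i else c₂ i) = true ∧
        ∀ i ∈ C₁,
          D ω (fun j => if j = i then !(b j) else if j ∈ C₁ then b j else c₂ j) = false := by
  classical
  constructor
  · -- irreducible → witness
    intro hirr
    by_contra hno
    push_neg at hno
    rcases eq_or_ne C₁ ∅ with hC1 | hC1
    · subst hC1
      have hDfalse : ∀ ω c, D ω c ≠ true := by
        intro ω c hc
        have hceq : (fun i => if i ∈ (∅ : Finset ι) then b i else c i) = c := by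
          funext k; simp
        obtain ⟨i, hi, -⟩ := hno ω c (by rw [hceq]; exact hc)
        simp at hi
      obtain ⟨j, -⟩ := hirr 0 (fun j => j.elim0) (fun j => j.elim0)
        (by
          intro ω c
          constructor
          · intro h; exact absurd h (hDfalse ω c)
          · rintro ⟨j, -⟩; exact j.elim0)
      exact j.elim0
    · obtain ⟨i₀, hi₀⟩ := Finset.nonempty_iff_ne_empty.mpr hC1
      set J := (Assign ι ⊕ Assign ι × ι) with hJ
      have hcore : ∀ (ω : Ω) (c' : Assign ι),
          D ω c' = true ↔ ∃ j : J, auxA D C₁ b j ω = true ∧ Satisfies c' (auxB C₁ b j) := by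
        intro ω c'
        constructor
        · intro hD
          by_cases hagr : ∀ k ∈ C₁, c' k = b k
          · have hceq : (fun i => if i ∈ C₁ then b i else c' i) = c' := by
              funext k
              by_cases hk : k ∈ C₁
              · simp [hk, hagr k hk]
              · simp [hk]
            obtain ⟨i, hi, hflip⟩ := hno ω c' (by rw [hceq]; exact hD)
            have hflip' : D ω (Function.update c' i (!(b i))) = true := by
              have heq : (fun j => if j = i then !(b j) else if j ∈ C₁ then b j else c' j)
                  = Function.update c' i (!(b i)) := by
                funext k
                by_cases hk : k = i
                · subst hk; simp
                · by_cases hk1 : k ∈ C₁ <;>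
                    simp [Function.update_of_ne hk, hk, hk1, hagr k]
              rw [← heq]
              simpa using hflip
            refine ⟨.inr (c', i), ?_, ?_⟩
            · simp only [auxA, if_pos (And.intro hagr hi)]
              simp [hD, hflip']
            · intro k v hk
              simp only [auxB, if_pos (And.intro hagr hi)] at hk
              by_cases hki : k = i
              · simp [hki] at hk
              · simp only [if_neg hki, Option.some.injEq] at hk
                exact hk
          · refine ⟨.inl c', ?_, ?_⟩
            · simp only [auxA, if_neg hagr]; exact hD
            · intro k v hk
              simp only [auxB, if_neg hagr, Option.some.injEq] at hk
              exact hk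
        · rintro ⟨j, hA, hsat⟩
          obtain c | ⟨c, i⟩ := j
          · by_cases hagr : ∀ k ∈ C₁, c k = b k
            · simp only [auxA, if_pos hagr] at hA
              exact absurd hA (by simp)
            · simp only [auxA, if_neg hagr] at hA
              have hcc : c' = c := by
                funext k
                exact hsat k (c k) (by simp only [auxB, if_neg hagr])
              rw [hcc]; exact hA
          · by_cases hgood : (∀ k ∈ C₁, c k = b k) ∧ i ∈ C₁
            · simp only [auxA, if_pos hgood] at hA
              rw [Bool.and_eq_true] at hA
              have hsat' : ∀ k, k ≠ i → c' k = c k := by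
                intro k hk
                refine hsat k (c k) ?_
                simp only [auxB, if_pos hgood, if_neg hk]
              by_cases hci : c' i = c i
              · have hcc : c' = c := funext fun k => by
                  by_cases hk : k = i
                  · subst hk; exact hci
                  · exact hsat' k hk
                rw [hcc]; exact hA.1
              · have hcb : c i = b i := hgood.1 i hgood.2
                have hcc : c' = Function.update c i (!(b i)) := funext fun k => by
                  by_cases hk : k = i
                  · subst hk
                    rw [Function.update_self]
                    rw [hcb] at hci
                    cases hv : c' k <;> cases hb : b k <;> simp_all
                  · rw [Function.update_of_ne hk]; exact hsat' k hk
                rw [hcc]; exact hA.2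
            · simp only [auxA, if_neg hgood] at hA
              exact absurd hA (by simp)
      set p := Fintype.card J with hp
      set e : Fin p ≃ J := (Fintype.equivFin J).symm with he
      have hrep : IsRepresentation D (fun k => auxA D C₁ b (e k))
          (fun k => auxB C₁ b (e k)) := by
        intro ω c'
        rw [hcore ω c']
        constructor
        · rintro ⟨j, hj⟩
          refine ⟨e.symm j, ?_⟩
          simpa only [Equiv.apply_symm_apply] using hj
        · rintro ⟨k, hk⟩
          exact ⟨e k, hk⟩
      obtain ⟨k, hext⟩ := hirr p _ _ hrep
      have hBi₀ : (fun i => if i ∈ C₁ then some (b i) else none) i₀ = some (b i₀) := by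
        simp [hi₀]
      rcases hj : e k with c | ⟨c, i⟩
      · rw [hj] at hext
        by_cases hagr : ∀ k ∈ C₁, c k = b k
        · have h := hext i₀ (b i₀) hBi₀
          simp only [auxB, if_pos hagr] at h
          exact absurd h (by simp)
        · refine hagr (fun i hi => ?_)
          have h := hext i (b i) (by simp [hi])
          simp only [auxB, if_neg hagr, Option.some.injEq] at h
          exact h
      · rw [hj] at hext
        by_cases hgood : (∀ k ∈ C₁, c k = b k) ∧ i ∈ C₁
        · have h := hext i (b i) (by simp [hgood.2])
          simp only [auxB, if_pos hgood, if_pos rfl] at h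
          exact absurd h (by simp)
        · have h := hext i₀ (b i₀) hBi₀
          simp only [auxB, if_neg hgood] at h
          exact absurd h (by simp)
  · -- witness → irreducible
    rintro ⟨ω, c₂, h1, h2⟩ p A 𝔅 hrep
    obtain ⟨j, hA, hsat⟩ := (hrep ω _).mp h1
    refine ⟨j, ?_⟩
    intro i v hBi
    by_cases hi : i ∈ C₁
    · simp only [if_pos hi, Option.some.injEq] at hBi
      subst hBi
      cases hb : 𝔅 j i with
      | none =>
        exfalso
        have hflipsat : Satisfies
            (fun k => if k = i then !(b k) else if k ∈ C₁ then b k else c₂ k) (𝔅 j) := by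
          intro k w hk
          by_cases hki : k = i
          · rw [hki, hb] at hk
            exact absurd hk (by simp)
          · simp only [if_neg hki]
            exact hsat k w hk
        have hDt := (hrep ω _).mpr ⟨j, hA, hflipsat⟩
        rw [h2 i hi] at hDt
        exact absurd hDt (by simp)
      | some w =>
        have hcw := hsat i w hb
        simp only [if_pos hi] at hcw
        rw [hcw]
    · simp only [if_neg hi] at hBi
      exact absurd hBi (by simp)
end

section
/- Suppose Ω ⊆ Ω* are nonempty sets of individuals and potential outcomes D_c(ω) ∈ {0,1} are given for every ω ∈ Ω* and every assignment c : C → {0,1}. If a conjunction of literals B is irreducible for D(C,Ω) (i.e., for the restriction of the potential outcomes to Ω), then B is irreducible for D(C,Ω*). -/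
/-- Corollary 3.1: irreducibility is preserved when enlarging the
population. -/
theorem irreducible_of_irreducible_subpopulation {ι Ω : Type*} [Fintype ι] [Nonempty ι]
    (D : Ω → Assign ι → Bool) (S : Set Ω) (hS : S.Nonempty) (B : Conj ι)
    (h : IrreducibleConj (fun (ω : S) (c : Assign ι) => D ω.1 c) B) :
    IrreducibleConj D B := by
  intro p A 𝔅 hrep
  exact h p (fun j ω => A j ω.1) 𝔅 (fun ω c => hrep ω.1 c)
end

section
/- Let B be a conjunction of literals whose domain is all of C (|B| = |C|). Then B is a minimal sufficient cause for D relative to C for some ω* ∈ Ω if and only if B is irreducible for D(C,Ω). -/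
/-- Proposition 3.1: for a conjunction whose domain is all of `C`,
being a minimal sufficient cause for some individual is equivalent to
irreducibility. -/
theorem minSuffCause_iff_irreducible {ι Ω : Type*} [Fintype ι] [Nonempty ι] [Nonempty Ω]
    (D : Ω → Assign ι → Bool) (b : ι → Bool) :
    (∃ ω : Ω, MinSuffCauseFor D (fun i => some (b i)) ω) ↔
      IrreducibleConj D (fun i => some (b i)) := by
  classical
  set B : Conj ι := fun i => some (b i) with hB
  constructor
  · rintro ⟨ω, hSuff, hMin⟩ p A 𝔅 hrep
    have hbB : Satisfies b B := by intro i v hv; exact Option.some.inj hv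
    have hDb : D ω b = true := hSuff b hbB
    obtain ⟨j, hA, hsat⟩ := (hrep ω b).1 hDb
    have hsuffj : SuffCauseFor D (𝔅 j) ω := by
      intro c hc; exact (hrep ω c).2 ⟨j, hA, hc⟩
    have hext : ConjExtends (𝔅 j) B := by
      intro i v hv
      simpa [hB] using congrArg some (hsat i v hv)
    by_cases heq : 𝔅 j = B
    · exact ⟨j, heq ▸ fun i v hv => hv⟩
    · exact absurd hsuffj (hMin (𝔅 j) hext heq)
  · intro hirr
    by_contra hno
    push_neg at hno
    -- build a representation using all conjunctions other than B
    set S := {B' : Conj ι // B' ≠ B}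
    haveI : Fintype S := by unfold S; infer_instance
    set p := Fintype.card S
    set e : Fin p ≃ S := (Fintype.equivFin S).symm
    set A : Fin p → Ω → Bool := fun j ω => decide (SuffCauseFor D (e j).1 ω)
    set 𝔅 : Fin p → Conj ι := fun j => (e j).1
    have hrep : IsRepresentation D A 𝔅 := by
      intro ω c
      constructor
      · intro hD
        by_cases hcb : c = b
        · -- B is sufficient for ω, not minimal, so a proper restriction is sufficient
          have hBsuff : SuffCauseFor D B ω := by
            intro c' hc'
            have : c' = b := funext fun i => hc' i (b i) rfl
            rw [this, ← hcb]; exact hD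
          have := hno ω
          unfold MinSuffCauseFor at this
          push_neg at this
          obtain ⟨B', hext, hne, hsuff⟩ := this hBsuff
          refine ⟨e.symm ⟨B', hne⟩, ?_, ?_⟩
          · simp only [A, e.apply_symm_apply, decide_eq_true_eq]; exact hsuff
          · simp only [Satisfies, 𝔅, e.apply_symm_apply]
            intro i v hv
            have hvb : v = b i := (Option.some.inj (hext i v hv)).symm
            rw [hcb, hvb]
        · -- the full conjunction of c works
          have hne : (fun i => some (c i)) ≠ B := by
            intro h
            exact hcb (funext fun i => Option.some.inj (congrFun h i))
          refine ⟨e.symm ⟨fun i => some (c i), hne⟩, ?_, ?_⟩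
          · simp only [A, e.apply_symm_apply, decide_eq_true_eq]
            intro c' hc'
            have : c' = c := funext fun i => hc' i (c i) rfl
            rw [this]; exact hD
          · simp only [𝔅, e.apply_symm_apply]
            intro i v hv; exact Option.some.inj hv
      · rintro ⟨j, hA, hsat⟩
        have : SuffCauseFor D (e j).1 ω := by
          simpa [A, decide_eq_true_eq] using hA
        exact this c hsat
    obtain ⟨j, hext⟩ := hirr p A 𝔅 hrep
    apply (e j).2
    funext i
    exact hext i (b i) rfl
end

section
/- Let B be a conjunction of literals whose domain is all of C (|B| = |C|). If B is a minimal sufficient cause for D for some ω* ∈ Ω, then B itself occurs as one of the conjunctions B_j in every sufficient cause representation (A, 𝔅) for D(C;Ω). -/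
/-- Corollary to Proposition 3.1: a full-domain minimal sufficient
cause occurs, as is, in every sufficient cause representation. -/
theorem minSuffCause_mem_every_representation {ι Ω : Type*} [Fintype ι] [Nonempty ι]
    [Nonempty Ω]
    (D : Ω → Assign ι → Bool) (b : ι → Bool)
    (h : ∃ ω : Ω, MinSuffCauseFor D (fun i => some (b i)) ω) :
    ∀ (p : ℕ) (A : Fin p → Ω → Bool) (𝔅 : Fin p → Conj ι),
      IsRepresentation D A 𝔅 → ∃ j, 𝔅 j = fun i => some (b i) := by
  obtain ⟨ω, hsuff, hmin⟩ := h
  intro p A 𝔅 hrep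
  have hD : D ω b = true := hsuff b (fun i v hv => by
    simpa using hv)
  obtain ⟨j, hAj, hsat⟩ := (hrep ω b).mp hD
  refine ⟨j, ?_⟩
  by_contra hne
  refine hmin (𝔅 j) ?_ hne ?_
  · intro i v hv
    have := hsat i v hv
    simp [this]
  · intro c hc
    exact (hrep ω c).mpr ⟨j, hAj, hc⟩
end

section
/- Let C = C₁ ⊔ C₂ and let B be a conjunction of literals with domain exactly C₁. If B is irreducible for D(C,Ω), then there exists a conjunction of literals B* with domain all of C (|B*| = |C|) extending B, such that every sufficient cause representation (A, 𝔅) for D(C;Ω) contains some B_j with B ⊆ B_j ⊆ B* (B_j extends B and B* extends B_j). -/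
theorem key_exists_min {ι Ω : Type*} [Fintype ι] [DecidableEq ι]
    (D : Ω → Assign ι → Bool) (C₁ : Finset ι) (b : ι → Bool)
    (h : IrreducibleConj D (fun i => if i ∈ C₁ then some (b i) else none)) :
    ∃ (ω : Ω) (cs : Assign ι), (∀ i ∈ C₁, cs i = b i) ∧ D ω cs = true ∧
      ∀ i ∈ C₁, D ω (Function.update cs i (!(cs i))) = false := by
  classical
  by_contra hk
  push_neg at hk
  simp only [ne_eq, Bool.not_eq_false] at hk
  -- hk : ∀ ω cs, (∀ i ∈ C₁, cs i = b i) → D ω cs = true →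
  --        ∃ i ∈ C₁, D ω (Function.update cs i (!(cs i))) = true
  set idx := {x : Assign ι × Option ι //
      (x.2 = none → ∃ i ∈ C₁, x.1 i ≠ b i) ∧ ∀ i, x.2 = some i → i ∈ C₁} with hidx
  have : Fintype idx := Fintype.ofFinite _
  set e : Fin (Fintype.card idx) ≃ idx := (Fintype.equivFin idx).symm with he
  set A0 : idx → Ω → Bool := fun x ω =>
    match x.1.2 with
    | none => D ω x.1.1
    | some i => D ω x.1.1 && D ω (Function.update x.1.1 i (!(x.1.1 i))) with hA0
  set B0 : idx → Conj ι := fun x i' =>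
    match x.1.2 with
    | none => some (x.1.1 i')
    | some i => if i' = i then none else some (x.1.1 i') with hB0
  have hrep : IsRepresentation D (fun j => A0 (e j)) (fun j => B0 (e j)) := by
    intro ω c
    constructor
    · intro hD
      by_cases hext : ∀ i ∈ C₁, c i = b i
      · obtain ⟨i, hiC, hflip⟩ := hk ω c hext hD
        refine ⟨e.symm ⟨(c, some i), by simp, fun i' hi' => by
          simp at hi'; subst hi'; exact hiC⟩, ?_, ?_⟩
        · simp only [Equiv.apply_symm_apply, hA0]
          simp [hD, hflip]
        · intro i' v hv
          simp only [Equiv.apply_symm_apply, hB0] at hv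
          by_cases hii : i' = i
          · simp [hii] at hv
          · simp [hii] at hv; exact hv
      · push_neg at hext
        obtain ⟨i, hiC, hne⟩ := hext
        refine ⟨e.symm ⟨(c, none), fun _ => ⟨i, hiC, hne⟩, by simp⟩, ?_, ?_⟩
        · simp only [Equiv.apply_symm_apply, hA0]; exact hD
        · intro i' v hv
          simp only [Equiv.apply_symm_apply, hB0] at hv
          exact Option.some_injective _ hv
    · rintro ⟨j, hA, hS⟩
      rcases hx : (e j).1.2 with _ | i
      · have hc : c = (e j).1.1 := by
          funext i'
          exact hS i' _ (by simp only [hB0, hx])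
        simp only [hA0, hx] at hA
        rwa [hc]
      · simp only [hA0, hx, Bool.and_eq_true] at hA
        have hc : ∀ i', i' ≠ i → c i' = (e j).1.1 i' := fun i' hi' =>
          hS i' _ (by simp only [hB0, hx, if_neg hi'])
        by_cases h2 : c i = (e j).1.1 i
        · have : c = (e j).1.1 := by
            funext i'; by_cases hii : i' = i
            · subst hii; exact h2
            · exact hc i' hii
          rw [this]; exact hA.1
        · have h3 : c i = !((e j).1.1 i) := by
            cases hci : c i <;> cases hxi : (e j).1.1 i <;> simp_all
          have : c = Function.update (e j).1.1 i (!((e j).1.1 i)) := by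
            funext i'; by_cases hii : i' = i
            · subst hii; simp [h3]
            · simp [Function.update, hii, hc i' hii]
          rw [this]; exact hA.2
  obtain ⟨j, hextj⟩ := h _ _ _ hrep
  rcases hx : (e j).1.2 with _ | i
  · obtain ⟨i, hiC, hne⟩ := (e j).2.1 hx
    have := hextj i (b i) (by simp [hiC])
    simp only [hB0, hx, Option.some.injEq] at this
    exact hne this
  · have hiC := (e j).2.2 i hx
    have := hextj i (b i) (by simp [hiC])
    simp [hB0, hx] at this

/-- Corollary 3.2: if `B` (with domain `C₁`) is irreducible then
there is a full conjunction `B*` extending `B` such that every representation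
contains some `B_j` with `B ⊆ B_j ⊆ B*`. -/
theorem irreducible_contained_in_full {ι Ω : Type*} [Fintype ι] [DecidableEq ι]
    [Nonempty ι] [Nonempty Ω]
    (D : Ω → Assign ι → Bool) (C₁ C₂ : Finset ι)
    (hdisj : Disjoint C₁ C₂) (hunion : C₁ ∪ C₂ = Finset.univ) (b : ι → Bool)
    (h : IrreducibleConj D (fun i => if i ∈ C₁ then some (b i) else none)) :
    ∃ b' : ι → Bool, (∀ i ∈ C₁, b' i = b i) ∧
      ∀ (p : ℕ) (A : Fin p → Ω → Bool) (𝔅 : Fin p → Conj ι),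
        IsRepresentation D A 𝔅 →
          ∃ j, ConjExtends (fun i => if i ∈ C₁ then some (b i) else none) (𝔅 j) ∧
               ConjExtends (𝔅 j) (fun i => some (b' i)) := by
    classical
  obtain ⟨ω₀, cs, hcs, hD, hmin⟩ := key_exists_min D C₁ b h
  refine ⟨cs, hcs, ?_⟩
  intro p A 𝔅 hrep
  obtain ⟨j, hA, hS⟩ := (hrep ω₀ cs).1 hD
  refine ⟨j, ?_, ?_⟩
  · intro i v hv
    by_cases hiC : i ∈ C₁
    · simp only [if_pos hiC, Option.some.injEq] at hv
      subst hv
      rcases h𝔅 : 𝔅 j i with _ | v'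
      · exfalso
        have hsat : Satisfies (Function.update cs i (!(cs i))) (𝔅 j) := by
          intro i' v' hv'
          by_cases hii : i' = i
          · subst hii; rw [h𝔅] at hv'; exact absurd hv' (by simp)
          · rw [Function.update_of_ne hii]; exact hS i' v' hv'
        have := (hrep ω₀ (Function.update cs i (!(cs i)))).2 ⟨j, hA, hsat⟩
        rw [hmin i hiC] at this
        exact Bool.false_ne_true this
      · have := hS i v' h𝔅
        rw [← this, hcs i hiC]
    · simp [if_neg hiC] at hv
  · intro i v hv
    simp [hS i v hv]
end

section
/- Let C and C′ be disjoint nonempty finite sets, let D′ assign to each ω ∈ Ω and each assignment c̃ : C ∪ C′ → {0,1} an outcome D′_{c̃}(ω) ∈ {0,1}, and let X′ : Ω → ({0,1}^{C′}) give the actual values of the variables in C′. Define the C-potential outcomes by D_c(ω) := D′ evaluated at the assignment equal to c on C and to X′(ω) on C′ (relativized consistency, valid when no variable in C′ is causally influenced by C). Let C = C₁ ⊔ C₂ and let B be a conjunction of literals with domain exactly C₁. If B is irreducible for D(C,Ω), then B is irreducible for D′(C ∪ C′, Ω). -/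
/-- Corollary 3.3: enlarging the set of potential causes by
variables not causally influenced by `C` preserves irreducibility, where the
`C`-potential outcomes are obtained by relativized consistency. -/
theorem irreducible_enlarge_causes {ι ι' Ω : Type*} [Fintype ι] [Fintype ι']
    [DecidableEq ι] [Nonempty ι] [Nonempty ι'] [Nonempty Ω]
    (D' : Ω → Assign (ι ⊕ ι') → Bool) (X' : Ω → ι' → Bool)
    (C₁ C₂ : Finset ι) (hdisj : Disjoint C₁ C₂) (hunion : C₁ ∪ C₂ = Finset.univ)
    (b : ι → Bool)
    (h : IrreducibleConj (fun ω (c : Assign ι) => D' ω (Sum.elim c (X' ω)))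
          (fun i => if i ∈ C₁ then some (b i) else none)) :
    IrreducibleConj D'
      (Sum.elim (fun i => if i ∈ C₁ then some (b i) else none) (fun _ => none)) := by
  intro p A 𝔅 hrep
  classical
  -- build a representation for the restricted outcomes
  set A' : Fin p → Ω → Bool := fun j ω =>
    A j ω && decide (∀ i' v, 𝔅 j (Sum.inr i') = some v → X' ω i' = v) with hA'
  set 𝔅' : Fin p → Conj ι := fun j i => 𝔅 j (Sum.inl i) with h𝔅'
  have hrep' : IsRepresentation (fun ω (c : Assign ι) => D' ω (Sum.elim c (X' ω))) A' 𝔅' := by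
    intro ω c
    rw [hrep ω (Sum.elim c (X' ω))]
    constructor
    · rintro ⟨j, hAj, hs⟩
      refine ⟨j, ?_, ?_⟩
      · simp only [hA', Bool.and_eq_true, decide_eq_true_iff]
        exact ⟨hAj, fun i' v hv => hs (Sum.inr i') v hv⟩
      · intro i v hv
        exact hs (Sum.inl i) v hv
    · rintro ⟨j, hAj, hs⟩
      simp only [hA', Bool.and_eq_true, decide_eq_true_iff] at hAj
      refine ⟨j, hAj.1, ?_⟩
      rintro (i | i') v hv
      · exact hs i v hv
      · exact hAj.2 i' v hv
  obtain ⟨j, hj⟩ := h p A' 𝔅' hrep'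
  refine ⟨j, ?_⟩
  rintro (i | i') v hv
  · exact hj i v hv
  · simp at hv
end

section
/- Let C = C₁ ⊔ C₂ and let B be a conjunction of literals with domain exactly C₁ and target values b : C₁ → {0,1}. Suppose W suffices to adjust for confounding of C on D. If for some assignment c₂ to C₂ and some value w (all conditioning events below having positive probability) one has 0 < E[D | C agrees with b on C₁, C = c₂ on C₂, W = w] − Σ_{i ∈ C₁} E[D | C agrees with b on C₁ \ {i}, C(i) = 1 − b(i), C = c₂ on C₂, W = w], then B is irreducible for D(C,Ω). -/
/-! By consistency and the absence of confounding given `W = w`, each observed conditional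
mean equals the mean of the corresponding potential outcome within the stratum `W = w`.
A positive difference then yields, by the union bound, an individual `ω` with
`D_{c₀}(ω) = 1` but with outcome `0` as soon as any single literal of `B` is flipped. In any
sufficient cause representation, the conjunction firing for `ω` at `c₀` must then contain
every literal of `B`, since otherwise it would still fire after flipping the missing one. -/

open MeasureTheory ProbabilityTheory

theorem Satisfies.update_of_eq_none {ι : Type*} [DecidableEq ι] {c : Assign ι} {B : Conj ι}
    (hc : Satisfies c B) {i : ι} (hi : B i = none) (v : Bool) :
    Satisfies (Function.update c i v) B := by
  intro j u hj
  have hji : j ≠ i := by rintro rfl; simp [hi] at hj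
  rw [Function.update_of_ne hji]
  exact hc j u hj

theorem irreducibleConj_of_flip {ι Ω : Type*} [DecidableEq ι] (D : Ω → Assign ι → Bool)
    (S : Finset ι) (c : Assign ι) (ω : Ω) (hc : D ω c = true)
    (hflip : ∀ i ∈ S, D ω (Function.update c i (!c i)) ≠ true) :
    IrreducibleConj D (fun i => if i ∈ S then some (c i) else none) := by
  intro p A 𝔅 hrep
  obtain ⟨j, hAj, hsat⟩ := (hrep ω c).mp hc
  refine ⟨j, fun i v hiv => ?_⟩
  by_cases hi : i ∈ S
  · obtain rfl : c i = v := by simpa [hi] using hiv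
    cases h𝔅 : 𝔅 j i with
    | none =>
      exact absurd ((hrep ω _).mpr ⟨j, hAj, hsat.update_of_eq_none h𝔅 _⟩) (hflip i hi)
    | some u => rw [hsat i u h𝔅]
  · simp [hi] at hiv

theorem cond_preimage_eq_of_indepFun {Ω α β : Type*} {_ : MeasurableSpace Ω}
    [MeasurableSpace α] [MeasurableSpace β] {μ : Measure Ω} [IsFiniteMeasure μ]
    {X : Ω → α} {Y : Ω → β} (h : IndepFun X Y μ) (hY : Measurable Y)
    {s : Set α} {t : Set β} (hs : MeasurableSet s) (ht : MeasurableSet t)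
    (hYt : μ (Y ⁻¹' t) ≠ 0) :
    μ[X ⁻¹' s | Y ⁻¹' t] = μ (X ⁻¹' s) := by
  rw [cond_apply (hY ht), Set.inter_comm, h.measure_inter_preimage_eq_mul s t hs ht,
    mul_left_comm, ENNReal.inv_mul_cancel hYt (measure_ne_top μ _), mul_one]

theorem cond_observed_eq_cond_potential {Ω γ : Type*} {_ : MeasurableSpace Ω}
    [MeasurableSpace γ] [MeasurableSingletonClass γ] {P : Measure Ω} [IsFiniteMeasure P]
    {D : Ω → γ → Bool} {Cobs : Ω → γ} (hC : Measurable Cobs) {E : Set Ω}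
    (hE : MeasurableSet E) {c : γ} (hcE : P ({ω | Cobs ω = c} ∩ E) ≠ 0)
    (hindep : IndepFun (fun ω => D ω c) Cobs P[|E]) :
    P[{ω | D ω (Cobs ω) = true} | {ω | Cobs ω = c} ∩ E] = P[{ω | D ω c = true} | E] := by
  have hCc : MeasurableSet (Cobs ⁻¹' {c}) := hC (measurableSet_singleton c)
  have hpos : P[Cobs ⁻¹' {c} | E] ≠ 0 :=
    (cond_pos_of_inter_ne_zero hE (by rwa [Set.inter_comm])).ne'
  calc P[{ω | D ω (Cobs ω) = true} | {ω | Cobs ω = c} ∩ E]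
      = P[|E][{ω | D ω (Cobs ω) = true} | Cobs ⁻¹' {c}] := by
        rw [cond_cond_eq_cond_inter hE hCc, Set.inter_comm]; rfl
    _ = P[|E][(fun ω => D ω c) ⁻¹' {true} | Cobs ⁻¹' {c}] := by
        rw [cond_apply hCc, cond_apply hCc]
        congr 2
        ext ω
        simp +contextual [Set.mem_preimage]
    _ = P[{ω | D ω c = true} | E] :=
        cond_preimage_eq_of_indepFun hindep hC (measurableSet_singleton _)
          (measurableSet_singleton c) hpos

theorem exists_mem_forall_notMem_of_sum_measureReal_lt {Ω ι : Type*} {_ : MeasurableSpace Ω}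
    {μ : Measure Ω} [IsFiniteMeasure μ] {s : Finset ι} {A : ι → Set Ω} {B : Set Ω}
    (h : ∑ i ∈ s, μ.real (A i) < μ.real B) : ∃ ω ∈ B, ∀ i ∈ s, ω ∉ A i := by
  by_contra! hcover
  have hsub : B ⊆ ⋃ i ∈ s, A i := fun ω hω => by simpa using hcover ω hω
  exact h.not_ge
    ((measureReal_mono hsub (measure_ne_top μ _)).trans (measureReal_biUnion_finset_le s A))

theorem irreducible_of_empirical_condition_general {ι Ω 𝕎 : Type*} [Fintype ι] [DecidableEq ι]
    [MeasurableSpace Ω] [MeasurableSpace 𝕎] [MeasurableSingletonClass 𝕎]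
    (P : Measure Ω) [IsProbabilityMeasure P]
    (D : Ω → Assign ι → Bool) (Cobs : Ω → Assign ι) (W : Ω → 𝕎)
    (hC : Measurable Cobs) (hW : Measurable W)
    (hconf : ∀ (c : Assign ι) (w : 𝕎), P {ω | W ω = w} ≠ 0 →
      IndepFun (fun ω => D ω c) Cobs (ProbabilityTheory.cond P {ω | W ω = w}))
    (C₁ : Finset ι)
    (b : ι → Bool) (c₂ : ι → Bool) (w : 𝕎)
    (hpos1 : P {ω | Cobs ω = (fun i => if i ∈ C₁ then b i else c₂ i) ∧ W ω = w} ≠ 0)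
    (hpos2 : ∀ i ∈ C₁,
      P {ω | Cobs ω = (fun j => if j = i then !(b j) else if j ∈ C₁ then b j else c₂ j)
              ∧ W ω = w} ≠ 0)
    (hineq : 0 <
      ((ProbabilityTheory.cond P
          {ω | Cobs ω = (fun i => if i ∈ C₁ then b i else c₂ i) ∧ W ω = w})
        {ω | D ω (Cobs ω) = true}).toReal
      - ∑ i ∈ C₁,
          ((ProbabilityTheory.cond P
              {ω | Cobs ω = (fun j => if j = i then !(b j) else if j ∈ C₁ then b j else c₂ j)
                    ∧ W ω = w})
            {ω | D ω (Cobs ω) = true}).toReal) :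
    IrreducibleConj D (fun i => if i ∈ C₁ then some (b i) else none) := by
  have hWw : MeasurableSet {ω | W ω = w} := hW (measurableSet_singleton w)
  have hW0 : P {ω | W ω = w} ≠ 0 := fun h0 => hpos1 (measure_mono_null (fun _ hω => hω.2) h0)
  have hobs : ∀ c, P {ω | Cobs ω = c ∧ W ω = w} ≠ 0 →
      P[{ω | D ω (Cobs ω) = true} | {ω | Cobs ω = c ∧ W ω = w}]
        = P[{ω | D ω c = true} | {ω | W ω = w}] :=
    fun c hc => cond_observed_eq_cond_potential hC hWw hc (hconf c w hW0)
  set c₀ : Assign ι := fun i => if i ∈ C₁ then b i else c₂ i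
  have hflip : ∀ i ∈ C₁, (fun j => if j = i then !(b j) else if j ∈ C₁ then b j else c₂ j)
      = Function.update c₀ i (!c₀ i) := by
    intro i hi
    funext j
    by_cases hji : j = i
    · subst hji; simp [c₀, hi]
    · simp [c₀, hji]
  rw [hobs _ hpos1, Finset.sum_congr rfl fun i hi => by rw [hobs _ (hpos2 i hi), hflip i hi],
    sub_pos] at hineq
  obtain ⟨ω, hω, hωflip⟩ := exists_mem_forall_notMem_of_sum_measureReal_lt hineq
  have hB : (fun i => if i ∈ C₁ then some (b i) else none)
      = fun i => if i ∈ C₁ then some (c₀ i) else none := by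
    funext i
    by_cases hi : i ∈ C₁ <;> simp [c₀, hi]
  rw [hB]
  exact irreducibleConj_of_flip D C₁ c₀ ω hω hωflip

/-- Theorem 4.2: empirical condition (no monotonicity) sufficient
for irreducibility of `B` (domain `C₁`, targets `b`). -/
theorem irreducible_of_empirical_condition {ι Ω 𝕎 : Type*} [Fintype ι] [DecidableEq ι]
    [Nonempty ι] [Nonempty Ω]
    [MeasurableSpace Ω] [MeasurableSpace 𝕎] [MeasurableSingletonClass 𝕎] [Countable 𝕎]
    (P : Measure Ω) [IsProbabilityMeasure P]
    (D : Ω → Assign ι → Bool) (Cobs : Ω → Assign ι) (W : Ω → 𝕎)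
    (hD : ∀ c : Assign ι, Measurable fun ω => D ω c)
    (hC : Measurable Cobs) (hW : Measurable W)
    (hconf : ∀ (c : Assign ι) (w : 𝕎), P {ω | W ω = w} ≠ 0 →
      IndepFun (fun ω => D ω c) Cobs (ProbabilityTheory.cond P {ω | W ω = w}))
    (C₁ C₂ : Finset ι) (hdisj : Disjoint C₁ C₂) (hunion : C₁ ∪ C₂ = Finset.univ)
    (b : ι → Bool) (c₂ : ι → Bool) (w : 𝕎)
    (hpos1 : P {ω | Cobs ω = (fun i => if i ∈ C₁ then b i else c₂ i) ∧ W ω = w} ≠ 0)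
    (hpos2 : ∀ i ∈ C₁,
      P {ω | Cobs ω = (fun j => if j = i then !(b j) else if j ∈ C₁ then b j else c₂ j)
              ∧ W ω = w} ≠ 0)
    (hineq : 0 <
      ((ProbabilityTheory.cond P
          {ω | Cobs ω = (fun i => if i ∈ C₁ then b i else c₂ i) ∧ W ω = w})
        {ω | D ω (Cobs ω) = true}).toReal
      - ∑ i ∈ C₁,
          ((ProbabilityTheory.cond P
              {ω | Cobs ω = (fun j => if j = i then !(b j) else if j ∈ C₁ then b j else c₂ j)
                    ∧ W ω = w})
            {ω | D ω (Cobs ω) = true}).toReal) :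
    IrreducibleConj D (fun i => if i ∈ C₁ then some (b i) else none) :=
  irreducible_of_empirical_condition_general P D Cobs W hC hW hconf C₁ b c₂ w hpos1 hpos2 hineq
end

section
/- Let C = C₁ ⊔ C₂ and let B be a conjunction of literals with domain exactly C₁ and target values b : C₁ → {0,1}, with C₁ partitioned as B₊ ⊔ B′. Suppose every literal of B at a coordinate in B₊ has a positive monotonic effect on D relative to C. If for some tree 𝔗 on B₊, some ω* ∈ Ω, and some assignment c₂ to C₂, one has 0 < D_{B=1, C₂=c₂}(ω*) − Σ_{i ∈ C₁} D_{B∖{i}=1, i flipped, C₂=c₂}(ω*) + Σ_{E ∈ 𝔗} D_{B∖E=1, E flipped, C₂=c₂}(ω*), where D_{B=1, C₂=c₂} denotes D at the assignment equal to b on C₁ and c₂ on C₂, 'i flipped' means coordinate i is set to 1 − b(i) with all other coordinates of C₁ at their target values, and 'E flipped' means both coordinates of the edge E are set to their flipped values 1 − b(·), then B is irreducible for D(C,Ω). -/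
lemma forest_bound {ι : Type*} [DecidableEq ι] :
    ∀ (n : ℕ) (V : Finset ι) (T : Finset (Sym2 ι)),
      V.card = n →
      (∀ e ∈ T, ¬ e.IsDiag ∧ ∀ i ∈ e, i ∈ V) →
      (∀ x ∈ V, ∀ y ∈ V, Relation.ReflTransGen (fun a b => s(a, b) ∈ T) x y) →
      T.card ≤ V.card - 1 →
      ∀ W ⊆ T, W.Nonempty →
        W.card + 1 ≤ (V.filter (fun v => ∃ e ∈ W, v ∈ e)).card := by
  intro n
  induction n using Nat.strong_induction_on with
  | _ n IH =>
    intro V T hVn hE hconn hcard W hWT hWne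
    classical
    -- V has at least two elements
    obtain ⟨e₀, he₀W⟩ := hWne
    have he₀T : e₀ ∈ T := hWT he₀W
    have hV2 : 2 ≤ V.card := by
      obtain ⟨hnd, hmem⟩ := hE e₀ he₀T
      induction e₀ using Sym2.ind with
      | _ x y =>
        have hxy : x ≠ y := by
          simpa [Sym2.isDiag_iff_proj_eq] using hnd
        have hx : x ∈ V := hmem x (by simp)
        have hy : y ∈ V := hmem y (by simp)
        exact Finset.one_lt_card.mpr ⟨x, hx, y, hy, hxy⟩
    -- per-edge endpoint count
    have key : ∀ e ∈ T, (V.filter (fun v => v ∈ e)).card = 2 := by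
      intro e he
      obtain ⟨hnd, hmem⟩ := hE e he
      induction e using Sym2.ind with
      | _ x y =>
        have hxy : x ≠ y := by
          simpa [Sym2.isDiag_iff_proj_eq] using hnd
        have : V.filter (fun v => v ∈ s(x, y)) = {x, y} := by
          ext v
          simp only [Finset.mem_filter, Sym2.mem_iff, Finset.mem_insert,
            Finset.mem_singleton]
          constructor
          · rintro ⟨_, h⟩; exact h
          · rintro (rfl | rfl)
            · exact ⟨hmem v (by simp), Or.inl rfl⟩
            · exact ⟨hmem v (by simp), Or.inr rfl⟩
        rw [this, Finset.card_insert_of_notMem (by simpa using hxy),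
          Finset.card_singleton]
    have hdeg : ∑ v ∈ V, (T.filter (fun e => v ∈ e)).card = 2 * T.card := by
      calc ∑ v ∈ V, (T.filter (fun e => v ∈ e)).card
          = ∑ v ∈ V, ∑ e ∈ T, if v ∈ e then 1 else 0 :=
            Finset.sum_congr rfl (fun v _ => Finset.card_filter _ _)
        _ = ∑ e ∈ T, ∑ v ∈ V, if v ∈ e then 1 else 0 := Finset.sum_comm
        _ = ∑ e ∈ T, (V.filter (fun v => v ∈ e)).card :=
            Finset.sum_congr rfl (fun e _ => (Finset.card_filter _ _).symm)
        _ = ∑ e ∈ T, 2 := Finset.sum_congr rfl key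
        _ = 2 * T.card := by rw [Finset.sum_const, smul_eq_mul]; ring
    -- there is a leaf
    have hleaf : ∃ v ∈ V, (T.filter (fun e => v ∈ e)).card ≤ 1 := by
      by_contra h
      push_neg at h
      have h2 : 2 * V.card ≤ ∑ v ∈ V, (T.filter (fun e => v ∈ e)).card := by
        calc 2 * V.card = ∑ _v ∈ V, 2 := by
              rw [Finset.sum_const, smul_eq_mul]; ring
          _ ≤ _ := Finset.sum_le_sum (fun v hv => h v hv)
      omega
    obtain ⟨ℓ, hℓV, hℓdeg⟩ := hleaf
    -- ℓ has at least one edge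
    obtain ⟨w, hwV, hwℓ⟩ := Finset.exists_mem_ne hV2 ℓ
    have hpath := hconn ℓ hℓV w hwV
    obtain ⟨u, hu⟩ : ∃ u, s(ℓ, u) ∈ T := by
      rcases Relation.ReflTransGen.cases_head hpath with h | ⟨z, hz, _⟩
      · exact absurd h.symm hwℓ
      · exact ⟨z, hz⟩
    have hℓu : ℓ ≠ u := by
      intro h
      exact (hE _ hu).1 (by subst h; simp [Sym2.isDiag_iff_proj_eq])
    have huV : u ∈ V := (hE _ hu).2 u (by simp)
    -- the filter of edges containing ℓ is exactly {s(ℓ,u)}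
    have hfilt : T.filter (fun e => ℓ ∈ e) = {s(ℓ, u)} := by
      have hmem : s(ℓ, u) ∈ T.filter (fun e => ℓ ∈ e) := by
        simp [Finset.mem_filter, hu]
      have hcard1 : (T.filter (fun e => ℓ ∈ e)).card = 1 := by
        have : 1 ≤ (T.filter (fun e => ℓ ∈ e)).card :=
          Finset.card_pos.mpr ⟨_, hmem⟩
        omega
      obtain ⟨a, ha⟩ := Finset.card_eq_one.mp hcard1
      rw [ha] at hmem ⊢
      simp only [Finset.mem_singleton] at hmem
      rw [hmem]
    have huniq : ∀ e ∈ T, ℓ ∈ e → e = s(ℓ, u) := by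
      intro e he hle
      have : e ∈ T.filter (fun e => ℓ ∈ e) := by simp [Finset.mem_filter, he, hle]
      simpa [hfilt] using this
    set e := s(ℓ, u) with he_def
    set T' := T.erase e with hT'_def
    set V' := V.erase ℓ with hV'_def
    have heT : e ∈ T := hu
    -- connectivity of T' on V'
    have hrepl : ∀ x y, Relation.ReflTransGen (fun a b => s(a, b) ∈ T) x y →
        Relation.ReflTransGen (fun a b => s(a, b) ∈ T')
          (if x = ℓ then u else x) (if y = ℓ then u else y) := by
      intro x y h
      induction h with
      | refl => exact .refl
      | @tail bb cc hab hbc ih =>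
        by_cases hb : bb = ℓ <;> by_cases hc : cc = ℓ
        · rw [hb, hc] at hbc
          exact absurd (by simp : (s(ℓ, ℓ) : Sym2 ι).IsDiag) (hE _ hbc).1
        · -- bb = ℓ, cc ≠ ℓ : edge s(ℓ, cc) = e so cc = u
          subst hb
          have := huniq _ hbc (by simp)
          have hcc : cc = u := by
            rw [Sym2.eq_iff] at this
            tauto
          simpa [hc, hcc] using ih
        · -- cc = ℓ : edge s(bb, ℓ) = e so bb = u
          subst hc
          have := huniq _ hbc (by simp)
          have hbb : bb = u := by
            rw [Sym2.eq_iff] at this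
            tauto
          simpa [hb, hbb] using ih
        · have hne : s(bb, cc) ≠ e := by
            intro hq
            rw [he_def, Sym2.eq_iff] at hq
            tauto
          have hstep : s(bb, cc) ∈ T' := Finset.mem_erase.mpr ⟨hne, hbc⟩
          simp only [hb, hc, if_false] at ih ⊢
          exact ih.tail hstep
    have hconn' : ∀ x ∈ V', ∀ y ∈ V', Relation.ReflTransGen
        (fun a b => s(a, b) ∈ T') x y := by
      intro x hx y hy
      rw [hV'_def, Finset.mem_erase] at hx hy
      have := hrepl x y (hconn x hx.2 y hy.2)
      simpa [hx.1, hy.1] using this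
    have hE' : ∀ e' ∈ T', ¬ e'.IsDiag ∧ ∀ i ∈ e', i ∈ V' := by
      intro e' he'
      have he'T : e' ∈ T := Finset.mem_of_mem_erase he'
      refine ⟨(hE e' he'T).1, fun i hi => ?_⟩
      rw [hV'_def, Finset.mem_erase]
      refine ⟨?_, (hE e' he'T).2 i hi⟩
      rintro rfl
      exact (Finset.mem_erase.mp he').1 (huniq e' he'T hi)
    have hVc : V'.card = V.card - 1 := Finset.card_erase_of_mem hℓV
    have hTc : T'.card = T.card - 1 := Finset.card_erase_of_mem heT
    have hTpos : 1 ≤ T.card := Finset.card_pos.mpr ⟨e, heT⟩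
    have hcard' : T'.card ≤ V'.card - 1 := by omega
    have hlt : V'.card < n := by omega
    by_cases heW : e ∈ W
    · set W' := W.erase e with hW'_def
      by_cases hW'ne : W'.Nonempty
      · have hIH := IH V'.card hlt V' T' rfl hE' hconn' hcard' W'
          (fun x hx => Finset.mem_erase.mpr
            ⟨(Finset.mem_erase.mp hx).1, hWT (Finset.mem_erase.mp hx).2⟩) hW'ne
        have hsub : V'.filter (fun v => ∃ e' ∈ W', v ∈ e') ⊆
            (V.filter (fun v => ∃ e' ∈ W, v ∈ e')).erase ℓ := by
          intro v hv
          rw [Finset.mem_filter] at hv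
          obtain ⟨hvV', e', he'W', hve'⟩ := hv
          rw [Finset.mem_erase]
          exact ⟨(Finset.mem_erase.mp hvV').1,
            Finset.mem_filter.mpr ⟨(Finset.mem_erase.mp hvV').2,
              e', Finset.mem_of_mem_erase he'W', hve'⟩⟩
        have hℓin : ℓ ∈ V.filter (fun v => ∃ e' ∈ W, v ∈ e') :=
          Finset.mem_filter.mpr ⟨hℓV, e, heW, by simp [he_def]⟩
        have h1 := Finset.card_le_card hsub
        have h2 : ((V.filter (fun v => ∃ e' ∈ W, v ∈ e')).erase ℓ).card =
            (V.filter (fun v => ∃ e' ∈ W, v ∈ e')).card - 1 :=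
          Finset.card_erase_of_mem hℓin
        have h3 : W'.card = W.card - 1 := Finset.card_erase_of_mem heW
        have hWpos : 1 ≤ W.card := Finset.card_pos.mpr ⟨e, heW⟩
        have h4 : 1 ≤ (V.filter (fun v => ∃ e' ∈ W, v ∈ e')).card :=
          Finset.card_pos.mpr ⟨ℓ, hℓin⟩
        omega
      · -- W = {e}
        have hWe : W = {e} := by
          apply Finset.eq_singleton_iff_unique_mem.mpr
          refine ⟨heW, fun x hx => ?_⟩
          by_contra hne
          exact hW'ne ⟨x, Finset.mem_erase.mpr ⟨hne, hx⟩⟩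
        have hsub : ({ℓ, u} : Finset ι) ⊆ V.filter (fun v => ∃ e' ∈ W, v ∈ e') := by
          intro v hv
          simp only [Finset.mem_insert, Finset.mem_singleton] at hv
          rcases hv with rfl | rfl
          · exact Finset.mem_filter.mpr ⟨hℓV, e, heW, by simp [he_def]⟩
          · exact Finset.mem_filter.mpr ⟨huV, e, heW, by simp [he_def]⟩
        have h2 : ({ℓ, u} : Finset ι).card = 2 := by
          rw [Finset.card_insert_of_notMem (by simpa using hℓu),
            Finset.card_singleton]
        have h3 := Finset.card_le_card hsub
        have hcW : W.card = 1 := by rw [hWe]; simp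
        omega
    · -- e ∉ W : W ⊆ T'
      have hWT' : W ⊆ T' := fun x hx =>
        Finset.mem_erase.mpr ⟨fun h => heW (h ▸ hx), hWT hx⟩
      have hIH := IH V'.card hlt V' T' rfl hE' hconn' hcard' W hWT' ⟨e₀, he₀W⟩
      have hsub : V'.filter (fun v => ∃ e' ∈ W, v ∈ e') ⊆
          V.filter (fun v => ∃ e' ∈ W, v ∈ e') := by
        intro v hv
        rw [Finset.mem_filter] at hv ⊢
        exact ⟨Finset.mem_of_mem_erase hv.1, hv.2⟩
      exact hIH.trans (Finset.card_le_card hsub)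


/-- Theorem 4.3: potential-outcome condition under positive
monotonicity of the literals in `B₊` sufficient for irreducibility. -/
theorem irreducible_of_monotone_condition {ι Ω : Type*} [Fintype ι] [DecidableEq ι]
    [Nonempty ι] [Nonempty Ω]
    (D : Ω → Assign ι → Bool) (C₁ C₂ Bp Bq : Finset ι)
    (hdisj : Disjoint C₁ C₂) (hunion : C₁ ∪ C₂ = Finset.univ)
    (hdisj' : Disjoint Bp Bq) (hunion' : Bp ∪ Bq = C₁)
    (b : ι → Bool)
    (hmono : ∀ i ∈ Bp, PosMonotone D i (b i))
    (T : Finset (Sym2 ι)) (hT : IsTreeOn Bp T)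
    (ω : Ω) (c₂ : ι → Bool)
    (hineq : 0 <
      ((D ω (fun i => if i ∈ C₁ then b i else c₂ i)).toNat : ℤ)
      - ∑ i ∈ C₁,
          ((D ω (fun j => if j = i then !(b j) else if j ∈ C₁ then b j else c₂ j)).toNat : ℤ)
      + ∑ E ∈ T,
          ((D ω (fun j => if j ∈ E then !(b j) else if j ∈ C₁ then b j else c₂ j)).toNat : ℤ)) :
    IrreducibleConj D (fun i => if i ∈ C₁ then some (b i) else none) := by
  classical
  intro p A 𝔅 hrep
  by_contra hno
  push_neg at hno
  have hBpC1 : Bp ⊆ C₁ := hunion' ▸ Finset.subset_union_left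
  set cstar : Assign ι := fun i => if i ∈ C₁ then b i else c₂ i with hcstar
  set ci : ι → Assign ι :=
    fun i j => if j = i then !(b j) else if j ∈ C₁ then b j else c₂ j with hci
  set cE : Sym2 ι → Assign ι :=
    fun E j => if j ∈ E then !(b j) else if j ∈ C₁ then b j else c₂ j with hcE
  set S : Finset ι := C₁.filter (fun i => D ω (ci i) = true) with hS
  set T₁ : Finset (Sym2 ι) := T.filter (fun E => D ω (cE E) = true) with hT₁
  have hsum1 : ∑ i ∈ C₁,
      ((D ω (fun j => if j = i then !(b j) else if j ∈ C₁ then b j else c₂ j)).toNat : ℤ)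
      = (S.card : ℤ) := by
    rw [hS, ← Finset.sum_boole]
    refine Finset.sum_congr rfl (fun i _ => ?_)
    cases h : D ω (ci i) <;> simp [hci] at h ⊢ <;> simp [h]
  have hsum2 : ∑ E ∈ T,
      ((D ω (fun j => if j ∈ E then !(b j) else if j ∈ C₁ then b j else c₂ j)).toNat : ℤ)
      = (T₁.card : ℤ) := by
    rw [hT₁, ← Finset.sum_boole]
    refine Finset.sum_congr rfl (fun E _ => ?_)
    cases h : D ω (cE E) <;> simp [hcE] at h ⊢ <;> simp [h]
  rw [hsum1, hsum2] at hineq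
  have htn : ((D ω cstar).toNat : ℤ) ≤ 1 := by
    cases h : D ω cstar <;> simp [h]
  -- endpoints of edges in T₁ belong to S
  have hT1S : ∀ E ∈ T₁, ∀ v ∈ E, v ∈ S := by
    have hstep : ∀ x y, x ∈ Bp → y ∈ C₁ → x ≠ y → s(x, y) ∈ T →
        D ω (cE s(x, y)) = true → D ω (ci y) = true := by
      intro x y hxBp hyC1 hxy hTxy hD
      have hxC1 : x ∈ C₁ := hBpC1 hxBp
      have h1 : Function.update (cE s(x, y)) x (!(b x)) = cE s(x, y) := by
        funext j
        rcases eq_or_ne j x with rfl | hjx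
        · simp [hcE]
        · simp [Function.update_apply, hjx]
      have h2 : Function.update (cE s(x, y)) x (b x) = ci y := by
        funext j
        rcases eq_or_ne j x with rfl | hjx
        · simp [Function.update_apply, hci, hxy, hxC1, (Ne.symm hxy)]
        · simp only [Function.update_apply, if_neg hjx, hcE, hci, Sym2.mem_iff]
          by_cases hjy : j = y <;> simp [hjx, hjy]
      have := hmono x hxBp ω (cE s(x, y)) (by rw [h1]; exact hD)
      rw [h2] at this
      exact this
    intro E hE v hv
    rw [hT₁, Finset.mem_filter] at hE
    obtain ⟨hET, hDE⟩ := hE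
    obtain ⟨hnd, hmem⟩ := hT.1 E hET
    induction E using Sym2.ind with
    | _ x y =>
      have hxy : x ≠ y := by simpa [Sym2.isDiag_iff_proj_eq] using hnd
      have hxBp : x ∈ Bp := hmem x (by simp)
      have hyBp : y ∈ Bp := hmem y (by simp)
      rw [Sym2.mem_iff] at hv
      rcases hv with rfl | rfl
      · -- v = x : use edge as s(y, x)
        have hswap : s(y, v) = s(v, y) := Sym2.eq_swap
        have hD' : D ω (ci v) = true := by
          apply hstep y v hyBp (hBpC1 hxBp) (Ne.symm hxy)
          · rw [hswap]; exact hET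
          · rw [hswap]; exact hDE
        exact Finset.mem_filter.mpr ⟨hBpC1 hxBp, hD'⟩
      · have hD' : D ω (ci v) = true :=
          hstep x v hxBp (hBpC1 hyBp) hxy hET hDE
        exact Finset.mem_filter.mpr ⟨hBpC1 hyBp, hD'⟩
  by_cases hT1ne : T₁.Nonempty
  · have hfb := forest_bound Bp.card Bp T rfl hT.1 hT.2.2 (le_of_eq hT.2.1)
      T₁ (Finset.filter_subset _ _) hT1ne
    have hsubS : Bp.filter (fun v => ∃ e ∈ T₁, v ∈ e) ⊆ S := by
      intro v hv
      rw [Finset.mem_filter] at hv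
      obtain ⟨_, e, heT₁, hve⟩ := hv
      exact hT1S e heT₁ v hve
    have hcards := Finset.card_le_card hsubS
    omega
  · have hT1c : T₁.card = 0 := by
      rw [Finset.not_nonempty_iff_eq_empty] at hT1ne
      simp [hT1ne]
    have hDstar : D ω cstar = true := by
      cases h : D ω cstar
      · rw [h] at hineq; simp at hineq; omega
      · rfl
    obtain ⟨j, hAj, hsat⟩ := (hrep ω cstar).mp hDstar
    have hnoj := hno j
    rw [ConjExtends] at hnoj
    push_neg at hnoj
    obtain ⟨i, v, hBi, hBji⟩ := hnoj
    have hiC1 : i ∈ C₁ := by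
      by_contra h
      simp [h] at hBi
    have hvb : v = b i := by
      simp [hiC1] at hBi
      exact hBi.symm
    have hnone : 𝔅 j i = none := by
      cases h𝔅 : 𝔅 j i with
      | none => rfl
      | some w =>
        have hw := hsat i w h𝔅
        have hbw : w = b i := by
          have : cstar i = b i := by simp [hcstar, hiC1]
          rw [this] at hw
          exact hw.symm
        rw [hbw, ← hvb] at h𝔅
        exact absurd h𝔅 hBji
    have hsat' : Satisfies (ci i) (𝔅 j) := by
      intro k w hk
      rcases eq_or_ne k i with rfl | hki
      · rw [hnone] at hk; exact absurd hk (by simp)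
      · have : ci i k = cstar k := by simp [hci, hcstar, hki]
        rw [this]
        exact hsat k w hk
    have hDi : D ω (ci i) = true := (hrep ω (ci i)).mpr ⟨j, hAj, hsat'⟩
    have hiS : i ∈ S := Finset.mem_filter.mpr ⟨hiC1, hDi⟩
    have hScard : 1 ≤ S.card := Finset.card_pos.mpr ⟨i, hiS⟩
    omega
end

section
/- Let C = C₁ ⊔ C₂ and let B be a conjunction of literals with domain exactly C₁ and target values b : C₁ → {0,1}, with C₁ partitioned as B₊ ⊔ B′. Suppose every literal of B at a coordinate in B₊ has a positive monotonic effect on D relative to C, and W suffices to adjust for confounding of C on D. If for some tree 𝔗 on B₊, some assignment c₂ to C₂, and some value w (all conditioning events below having positive probability) one has 0 < E[D | C agrees with b on C₁, C = c₂ on C₂, W = w] − Σ_{i ∈ C₁} E[D | C agrees with b on C₁ ∖ {i}, C(i) = 1 − b(i), C = c₂ on C₂, W = w] + Σ_{E ∈ 𝔗} E[D | C agrees with b on C₁ ∖ E, C(i) = 1 − b(i) for i ∈ E, C = c₂ on C₂, W = w], then B is irreducible for D(C,Ω). -/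
open MeasureTheory ProbabilityTheory

/-!
Suppose some representation has no conjunction extending `B`, and write `c₀` for the base
assignment, `c₀ⁱ` and `c₀ᴱ` for `c₀` with the literal at `i`, resp. at both ends of the edge `E`,
negated. For each individual, if `D(c₀) = 1` then the conjunction that fires at `c₀` leaves some
literal of `B` free, so `D(c₀ⁱ) = 1` for some `i`; and by positive monotonicity `D(c₀ᴱ) = 1` forces
`D(c₀ⁱ) = 1` at both ends `i` of `E`. A set of edges of a tree spanned by `k` vertices has at most
`k - 1` elements (contracting the `k` vertices leaves a connected graph), so
`D(c₀) + ∑_E D(c₀ᴱ) ≤ ∑_i D(c₀ⁱ)` pointwise. Taking expectations given `W = w`, where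
consistency and unconfoundedness identify the observed conditional means with the means of the
potential outcomes, contradicts the hypothesis.
-/

section Trees

variable {ι : Type*} [DecidableEq ι]

theorem Finset.card_le_card_add_one_of_reflTransGen {V : Finset ι} {T : Finset (Sym2 ι)}
    (hV : V.Nonempty) (hT : ∀ e ∈ T, ∀ i ∈ e, i ∈ V)
    (hconn : ∀ x ∈ V, ∀ y ∈ V, Relation.ReflTransGen (fun a b => s(a, b) ∈ T) x y) :
    V.card ≤ T.card + 1 := by
  let G : SimpleGraph V := SimpleGraph.fromEdgeSet {e | e.map Subtype.val ∈ T}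
  have hreach (x : V) : ∀ y, Relation.ReflTransGen (fun a b => s(a, b) ∈ T) x.1 y →
      ∀ hy : y ∈ V, G.Reachable x ⟨y, hy⟩ := by
    intro y hxy
    induction hxy with
    | refl => exact fun _ => .rfl
    | @tail z y _ hzy ih =>
      intro hy
      have hz : z ∈ V := hT _ hzy z (Sym2.mem_mk_left z y)
      refine (ih hz).trans ?_
      by_cases hzy' : z = y
      · subst hzy'; rfl
      · exact SimpleGraph.Adj.reachable <|
          (SimpleGraph.fromEdgeSet_adj _).2 ⟨hzy, fun h => hzy' (congrArg Subtype.val h)⟩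
  have hG : G.Connected :=
    haveI := hV.to_subtype
    ⟨fun x y => hreach x y.1 (hconn x.1 x.2 y.1 y.2) y.2⟩
  have hedges : Nat.card G.edgeSet ≤ T.card := by
    rw [← Nat.card_eq_finsetCard]
    refine Nat.card_le_card_of_injective
      (fun e => ⟨e.1.map Subtype.val, by have := e.2; simp_all [G]⟩) ?_
    intro e e' h
    exact Subtype.ext (Sym2.map.injective Subtype.val_injective (congrArg Subtype.val h))
  have := hG.card_vert_le_card_edgeSet_add_one
  rw [Nat.card_eq_finsetCard] at this
  omega

theorem IsTreeOn.card_lt_card {V S : Finset ι} {T F : Finset (Sym2 ι)} (hT : IsTreeOn V T)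
    (hFT : F ⊆ T) (hFS : ∀ e ∈ F, ∀ i ∈ e, i ∈ S) (hF : F.Nonempty) : F.card < S.card := by
  obtain ⟨hends, hcard, hconn⟩ := hT
  obtain ⟨e₀, he₀⟩ := hF
  set s₀ := e₀.out.1
  have hs₀S : s₀ ∈ S := hFS e₀ he₀ s₀ e₀.out_fst_mem
  have hs₀V : s₀ ∈ V := (hends e₀ (hFT he₀)).2 s₀ e₀.out_fst_mem
  -- Contract `S` to the single vertex `s₀`: the edges of `F` become loops, and the contracted
  -- graph stays connected on the `|V \ S| + 1` vertices with the `|T \ F|` remaining edges.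
  let g : ι → ι := fun x => if x ∈ S then s₀ else x
  have hg : ∀ x ∈ V, g x ∈ insert s₀ (V \ S) := by
    intro x hx
    by_cases hxS : x ∈ S <;> simp [g, hxS, hx]
  have hg_surj : ∀ x' ∈ insert s₀ (V \ S), ∃ x ∈ V, g x = x' := by
    intro x' hx'
    rcases Finset.mem_insert.1 hx' with rfl | hx'
    · exact ⟨s₀, hs₀V, if_pos hs₀S⟩
    · obtain ⟨hxV, hxS⟩ := Finset.mem_sdiff.1 hx'
      exact ⟨x', hxV, if_neg hxS⟩
  have hcontract := Finset.card_le_card_add_one_of_reflTransGen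
    (V := insert s₀ (V \ S)) (T := (T \ F).image (Sym2.map g)) (Finset.insert_nonempty _ _)
    (by
      intro e he i hi
      obtain ⟨e', he', rfl⟩ := Finset.mem_image.1 he
      obtain ⟨j, hj, rfl⟩ := Sym2.mem_map.1 hi
      exact hg j ((hends e' (Finset.mem_sdiff.1 he').1).2 j hj))
    (by
      intro x' hx' y' hy'
      obtain ⟨x, hx, rfl⟩ := hg_surj x' hx'
      obtain ⟨y, hy, rfl⟩ := hg_surj y' hy'
      refine Relation.ReflTransGen.lift' g (fun a b hab => ?_) _ _ (hconn x hx y hy)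
      by_cases habF : s(a, b) ∈ F
      · have ha := hFS _ habF a (Sym2.mem_mk_left a b)
        have hb := hFS _ habF b (Sym2.mem_mk_right a b)
        simp only [Function.onFun, g, if_pos ha, if_pos hb]
        rfl
      · exact .single (Finset.mem_image.2 ⟨s(a, b), Finset.mem_sdiff.2 ⟨hab, habF⟩, rfl⟩))
  have h₁ : (insert s₀ (V \ S)).card = (V \ S).card + 1 :=
    Finset.card_insert_of_notMem (by simp [hs₀S])
  have h₂ := (T \ F).card_image_le (f := Sym2.map g)
  have h₃ : (T \ F).card + F.card = T.card := Finset.card_sdiff_add_card_eq_card hFT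
  have h₄ := Finset.card_sdiff_add_card_inter V S
  have h₅ : (V ∩ S).card ≤ S.card := Finset.card_le_card Finset.inter_subset_right
  have h₆ : 0 < V.card := Finset.card_pos.2 ⟨s₀, hs₀V⟩
  omega

end Trees

section SufficientCauses

variable {ι Ω : Type*} [DecidableEq ι]

def negateAt (b c : Assign ι) (i : ι) : Assign ι := fun j => if j = i then !(b j) else c j

def negateOn (b c : Assign ι) (e : Sym2 ι) : Assign ι := fun j => if j ∈ e then !(b j) else c j

theorem exists_negateAt_of_forall_not_conjExtends {D : Ω → Assign ι → Bool} {p : ℕ}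
    {A : Fin p → Ω → Bool} {𝔅 : Fin p → Conj ι} (hrep : IsRepresentation D A 𝔅)
    {C₁ : Finset ι} {b c : Assign ι}
    (hno : ∀ j, ¬ ConjExtends (fun i => if i ∈ C₁ then some (b i) else none) (𝔅 j))
    (hc : ∀ i ∈ C₁, c i = b i) {ω : Ω} (hD : D ω c = true) :
    ∃ i ∈ C₁, D ω (negateAt b c i) = true := by
  obtain ⟨j, hAj, hsat⟩ := (hrep ω c).1 hD
  obtain ⟨i, hi, hne⟩ : ∃ i ∈ C₁, 𝔅 j i ≠ some (b i) := by
    simpa [ConjExtends] using hno j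
  have hfree : 𝔅 j i = none := by
    cases h : 𝔅 j i with
    | none => rfl
    | some u => exact absurd (hc i hi ▸ hsat i u h ▸ h) hne
  refine ⟨i, hi, (hrep ω _).2 ⟨j, hAj, fun k u hk => ?_⟩⟩
  have hki : k ≠ i := by
    rintro rfl
    simp [hfree] at hk
  simpa [negateAt, hki] using hsat k u hk

theorem PosMonotone.apply_negateAt_of_apply_negateOn {D : Ω → Assign ι → Bool} {i y : ι}
    {b c : Assign ι} (hmono : PosMonotone D y (b y)) (hyi : y ≠ i) (hcy : c y = b y) {ω : Ω}
    (hD : D ω (negateOn b c s(i, y)) = true) : D ω (negateAt b c i) = true := by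
  have hon : negateOn b c s(i, y) = Function.update (negateAt b c i) y (!(b y)) := by
    ext j
    simp only [negateOn, negateAt, Function.update_apply, Sym2.mem_iff]
    split_ifs <;> simp_all
  have hat : negateAt b c i = Function.update (negateAt b c i) y (b y) := by
    simp [negateAt, hyi, hcy]
  rw [hat]
  exact hmono ω _ (hon ▸ hD)

theorem ite_add_card_filter_negateOn_le {D : Ω → Assign ι → Bool} {p : ℕ}
    {A : Fin p → Ω → Bool} {𝔅 : Fin p → Conj ι} (hrep : IsRepresentation D A 𝔅)
    {C₁ V : Finset ι} {T : Finset (Sym2 ι)} {b c : Assign ι}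
    (hno : ∀ j, ¬ ConjExtends (fun i => if i ∈ C₁ then some (b i) else none) (𝔅 j))
    (hc : ∀ i ∈ C₁, c i = b i) (hVC : V ⊆ C₁) (hmono : ∀ i ∈ V, PosMonotone D i (b i))
    (hT : IsTreeOn V T) (ω : Ω) :
    (if D ω c = true then 1 else 0) + (T.filter fun e => D ω (negateOn b c e) = true).card ≤
      (C₁.filter fun i => D ω (negateAt b c i) = true).card := by
  set F := T.filter fun e => D ω (negateOn b c e) = true
  set S := C₁.filter fun i => D ω (negateAt b c i) = true
  have hFS : ∀ e ∈ F, ∀ i ∈ e, i ∈ S := by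
    intro e he i hi
    obtain ⟨heT, hDe⟩ := Finset.mem_filter.1 he
    have hyV : Sym2.Mem.other hi ∈ V := (hT.1 e heT).2 _ (Sym2.other_mem hi)
    rw [← Sym2.other_spec hi] at hDe
    refine Finset.mem_filter.2 ⟨hVC ((hT.1 e heT).2 i hi), ?_⟩
    exact (hmono _ hyV).apply_negateAt_of_apply_negateOn (Sym2.other_ne (hT.1 e heT).1 hi)
      (hc _ (hVC hyV)) hDe
  rcases F.eq_empty_or_nonempty with hF | hF
  · rw [hF, Finset.card_empty, add_zero]
    split_ifs with hD
    · obtain ⟨i, hi, hDi⟩ := exists_negateAt_of_forall_not_conjExtends hrep hno hc hD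
      exact Finset.card_pos.2 ⟨i, Finset.mem_filter.2 ⟨hi, hDi⟩⟩
    · exact Nat.zero_le _
  · have : F.card < S.card := hT.card_lt_card (Finset.filter_subset _ T) hFS hF
    split_ifs <;> omega

end SufficientCauses

section Probability

variable {Ω : Type*} [MeasurableSpace Ω]

theorem ProbabilityTheory.IndepFun.cond_preimage_eq {α β : Type*} [MeasurableSpace α]
    [MeasurableSpace β] {μ : Measure Ω} [IsFiniteMeasure μ] {X : Ω → α} {Y : Ω → β}
    (hXY : IndepFun X Y μ) {s : Set α} {t : Set β} (hs : MeasurableSet s)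
    (ht : MeasurableSet t) (hY : Measurable Y) (hpos : μ (Y ⁻¹' t) ≠ 0) :
    μ[X ⁻¹' s | Y ⁻¹' t] = μ (X ⁻¹' s) := by
  rw [cond_apply (hY ht), Set.inter_comm, hXY.measure_inter_preimage_eq_mul s t hs ht, mul_comm,
    ENNReal.mul_inv_cancel_right hpos (measure_ne_top μ _)]

theorem measureReal_add_sum_le_sum_of_forall_le {α β : Type*} {μ : Measure Ω}
    [IsFiniteMeasure μ] {f : Ω → Bool} {g : α → Ω → Bool} {h : β → Ω → Bool} {s : Finset α}
    {t : Finset β} (hf : Measurable f) (hg : ∀ a, Measurable (g a)) (hh : ∀ b, Measurable (h b))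
    (hle : ∀ ω, (if f ω = true then 1 else 0) + (s.filter fun a => g a ω = true).card ≤
      (t.filter fun b => h b ω = true).card) :
    μ.real {ω | f ω = true} + ∑ a ∈ s, μ.real {ω | g a ω = true} ≤
      ∑ b ∈ t, μ.real {ω | h b ω = true} := by
  have hind (k : Ω → Bool) :
      (fun ω => if k ω = true then (1 : ℝ) else 0) = {ω | k ω = true}.indicator 1 := by
    ext ω
    simp [Set.indicator_apply]
  have hint {k : Ω → Bool} (hk : Measurable k) :
      Integrable (fun ω => if k ω = true then (1 : ℝ) else 0) μ :=
    hind k ▸ (integrable_const 1).indicator (hk (measurableSet_singleton true))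
  have hval {k : Ω → Bool} (hk : Measurable k) :
      ∫ ω, (if k ω = true then (1 : ℝ) else 0) ∂μ = μ.real {ω | k ω = true} := by
    rw [hind k]
    exact integral_indicator_one (hk (measurableSet_singleton true))
  calc μ.real {ω | f ω = true} + ∑ a ∈ s, μ.real {ω | g a ω = true}
      = ∫ ω, ((if f ω = true then 1 else 0) + ∑ a ∈ s, if g a ω = true then 1 else 0) ∂μ := by
        rw [integral_add (hint hf) (integrable_finsetSum _ fun a _ => hint (hg a)),
          integral_finsetSum _ fun a _ => hint (hg a), hval hf]
        simp only [hval (hg _)]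
    _ ≤ ∫ ω, (∑ b ∈ t, if h b ω = true then 1 else 0) ∂μ := by
        refine integral_mono ((hint hf).add (integrable_finsetSum _ fun a _ => hint (hg a)))
          (integrable_finsetSum _ fun b _ => hint (hh b)) fun ω => ?_
        simp only [Finset.sum_boole]
        exact_mod_cast hle ω
    _ = ∑ b ∈ t, μ.real {ω | h b ω = true} := by
        rw [integral_finsetSum _ fun b _ => hint (hh b)]
        simp only [hval (hh _)]

variable {ι 𝕎 : Type*} [MeasurableSpace 𝕎] [MeasurableSingletonClass 𝕎]

def AdjustsForConfounding (P : Measure Ω) (D : Ω → Assign ι → Bool) (C : Ω → Assign ι)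
    (W : Ω → 𝕎) : Prop :=
  ∀ c w, P {ω | W ω = w} ≠ 0 → IndepFun (fun ω => D ω c) C (P[|{ω | W ω = w}])

variable [Countable ι] {P : Measure Ω} [IsFiniteMeasure P] {D : Ω → Assign ι → Bool}
  {C : Ω → Assign ι} {W : Ω → 𝕎}

theorem AdjustsForConfounding.cond_eq (hconf : AdjustsForConfounding P D C W)
    (hC : Measurable C) (hW : Measurable W) {c : Assign ι} {w : 𝕎}
    (hpos : P {ω | C ω = c ∧ W ω = w} ≠ 0) :
    P[{ω | D ω (C ω) = true} | {ω | C ω = c ∧ W ω = w}] =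
      P[|{ω | W ω = w}] {ω | D ω c = true} := by
  have hCc : MeasurableSet {ω | C ω = c} := hC (measurableSet_singleton c)
  have hWw : MeasurableSet {ω | W ω = w} := hW (measurableSet_singleton w)
  have hinter : {ω | C ω = c ∧ W ω = w} = {ω | W ω = w} ∩ {ω | C ω = c} :=
    Set.ext fun _ => and_comm
  rw [hinter] at hpos ⊢
  have hw : P {ω | W ω = w} ≠ 0 := fun h => hpos (measure_mono_null Set.inter_subset_left h)
  have hQ : P[{ω | C ω = c} | {ω | W ω = w}] ≠ 0 := (cond_pos_of_inter_ne_zero hWw hpos).ne'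
  calc P[{ω | D ω (C ω) = true} | {ω | W ω = w} ∩ {ω | C ω = c}]
      = P[|{ω | W ω = w}][{ω | D ω c = true} | {ω | C ω = c}] := by
        rw [← cond_cond_eq_cond_inter hWw hCc, cond_apply hCc, cond_apply hCc]
        congr 2
        ext ω
        simp only [Set.mem_inter_iff, Set.mem_ofPred_eq]
        exact and_congr_right fun h => h ▸ Iff.rfl
    _ = P[|{ω | W ω = w}] {ω | D ω c = true} :=
        (hconf c w hw).cond_preimage_eq (s := {true}) (t := {c}) (measurableSet_singleton true)
          (measurableSet_singleton c) hC hQ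

theorem AdjustsForConfounding.cond_le (hconf : AdjustsForConfounding P D C W)
    (hC : Measurable C) (hW : Measurable W) (c : Assign ι) (w : 𝕎) :
    P[{ω | D ω (C ω) = true} | {ω | C ω = c ∧ W ω = w}] ≤
      P[|{ω | W ω = w}] {ω | D ω c = true} := by
  by_cases hpos : P {ω | C ω = c ∧ W ω = w} = 0
  · simp [cond_eq_zero_of_meas_eq_zero hpos]
  · exact (hconf.cond_eq hC hW hpos).le

end Probability

theorem irreducible_of_empirical_monotone_condition_general {ι Ω 𝕎 : Type*} [Fintype ι]
    [DecidableEq ι]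
    [MeasurableSpace Ω] [MeasurableSpace 𝕎] [MeasurableSingletonClass 𝕎]
    (P : Measure Ω) [IsProbabilityMeasure P]
    (D : Ω → Assign ι → Bool) (Cobs : Ω → Assign ι) (W : Ω → 𝕎)
    (hD : ∀ c : Assign ι, Measurable fun ω => D ω c)
    (hC : Measurable Cobs) (hW : Measurable W)
    (hconf : ∀ (c : Assign ι) (w : 𝕎), P {ω | W ω = w} ≠ 0 →
      IndepFun (fun ω => D ω c) Cobs (ProbabilityTheory.cond P {ω | W ω = w}))
    (C₁ Bp Bq : Finset ι)
    (hunion' : Bp ∪ Bq = C₁)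
    (b : ι → Bool)
    (hmono : ∀ i ∈ Bp, PosMonotone D i (b i))
    (T : Finset (Sym2 ι)) (hT : IsTreeOn Bp T)
    (c₂ : ι → Bool) (w : 𝕎)
    (hpos2 : ∀ i ∈ C₁,
      P {ω | Cobs ω = (fun j => if j = i then !(b j) else if j ∈ C₁ then b j else c₂ j)
              ∧ W ω = w} ≠ 0)
    (hineq : 0 <
      ((ProbabilityTheory.cond P
          {ω | Cobs ω = (fun i => if i ∈ C₁ then b i else c₂ i) ∧ W ω = w})
        {ω | D ω (Cobs ω) = true}).toReal
      - ∑ i ∈ C₁,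
          ((ProbabilityTheory.cond P
              {ω | Cobs ω = (fun j => if j = i then !(b j) else if j ∈ C₁ then b j else c₂ j)
                    ∧ W ω = w})
            {ω | D ω (Cobs ω) = true}).toReal
      + ∑ E ∈ T,
          ((ProbabilityTheory.cond P
              {ω | Cobs ω = (fun j => if j ∈ E then !(b j) else if j ∈ C₁ then b j else c₂ j)
                    ∧ W ω = w})
            {ω | D ω (Cobs ω) = true}).toReal) :
    IrreducibleConj D (fun i => if i ∈ C₁ then some (b i) else none) := by
  intro p A 𝔅 hrep
  by_contra! hno
  set c₀ : Assign ι := fun i => if i ∈ C₁ then b i else c₂ i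
  have hc₀ : ∀ i ∈ C₁, c₀ i = b i := fun i hi => if_pos hi
  have hBp : Bp ⊆ C₁ := hunion' ▸ Finset.subset_union_left
  have hadj : AdjustsForConfounding P D Cobs W := hconf
  have hcount := measureReal_add_sum_le_sum_of_forall_le (μ := P[|{ω | W ω = w}]) (hD c₀)
    (fun e => hD (negateOn b c₀ e)) (fun i => hD (negateAt b c₀ i))
    (ite_add_card_filter_negateOn_le hrep hno hc₀ hBp hmono hT)
  have hbase := ENNReal.toReal_mono (measure_ne_top _ _) (hadj.cond_le hC hW c₀ w)
  have hedges := Finset.sum_le_sum (s := T) fun e _ =>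
    ENNReal.toReal_mono (measure_ne_top _ _) (hadj.cond_le hC hW (negateOn b c₀ e) w)
  have hsingles := Finset.sum_congr (s₁ := C₁) rfl fun i hi =>
    congrArg ENNReal.toReal (hadj.cond_eq (D := D) hC hW (c := negateAt b c₀ i) (hpos2 i hi))
  unfold negateOn at hedges hcount
  unfold negateAt at hsingles hcount
  simp only [Measure.real] at hcount
  linarith

/-- Corollary 4.1: empirical condition under positive
monotonicity of the literals in `B₊` sufficient for irreducibility. -/
theorem irreducible_of_empirical_monotone_condition {ι Ω 𝕎 : Type*} [Fintype ι]
    [DecidableEq ι] [Nonempty ι] [Nonempty Ω]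
    [MeasurableSpace Ω] [MeasurableSpace 𝕎] [MeasurableSingletonClass 𝕎] [Countable 𝕎]
    (P : Measure Ω) [IsProbabilityMeasure P]
    (D : Ω → Assign ι → Bool) (Cobs : Ω → Assign ι) (W : Ω → 𝕎)
    (hD : ∀ c : Assign ι, Measurable fun ω => D ω c)
    (hC : Measurable Cobs) (hW : Measurable W)
    (hconf : ∀ (c : Assign ι) (w : 𝕎), P {ω | W ω = w} ≠ 0 →
      IndepFun (fun ω => D ω c) Cobs (ProbabilityTheory.cond P {ω | W ω = w}))
    (C₁ C₂ Bp Bq : Finset ι)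
    (hdisj : Disjoint C₁ C₂) (hunion : C₁ ∪ C₂ = Finset.univ)
    (hdisj' : Disjoint Bp Bq) (hunion' : Bp ∪ Bq = C₁)
    (b : ι → Bool)
    (hmono : ∀ i ∈ Bp, PosMonotone D i (b i))
    (T : Finset (Sym2 ι)) (hT : IsTreeOn Bp T)
    (c₂ : ι → Bool) (w : 𝕎)
    (hpos1 : P {ω | Cobs ω = (fun i => if i ∈ C₁ then b i else c₂ i) ∧ W ω = w} ≠ 0)
    (hpos2 : ∀ i ∈ C₁,
      P {ω | Cobs ω = (fun j => if j = i then !(b j) else if j ∈ C₁ then b j else c₂ j)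
              ∧ W ω = w} ≠ 0)
    (hpos3 : ∀ E ∈ T,
      P {ω | Cobs ω = (fun j => if j ∈ E then !(b j) else if j ∈ C₁ then b j else c₂ j)
              ∧ W ω = w} ≠ 0)
    (hineq : 0 <
      ((ProbabilityTheory.cond P
          {ω | Cobs ω = (fun i => if i ∈ C₁ then b i else c₂ i) ∧ W ω = w})
        {ω | D ω (Cobs ω) = true}).toReal
      - ∑ i ∈ C₁,
          ((ProbabilityTheory.cond P
              {ω | Cobs ω = (fun j => if j = i then !(b j) else if j ∈ C₁ then b j else c₂ j)
                    ∧ W ω = w})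
            {ω | D ω (Cobs ω) = true}).toReal
      + ∑ E ∈ T,
          ((ProbabilityTheory.cond P
              {ω | Cobs ω = (fun j => if j ∈ E then !(b j) else if j ∈ C₁ then b j else c₂ j)
                    ∧ W ω = w})
            {ω | D ω (Cobs ω) = true}).toReal) :
    IrreducibleConj D (fun i => if i ∈ C₁ then some (b i) else none) :=
  irreducible_of_empirical_monotone_condition_general P D Cobs W hD hC hW hconf C₁ Bp Bq hunion' b
    hmono T hT c₂ w hpos2 hineq
end

section
/- Let C = C₁ ⊔ C₂ and let B be a conjunction of literals with domain exactly C₁ and target values b : C₁ → {0,1}. Then B is singular for D(C,Ω) if and only if there exists ω* ∈ Ω such that for every assignment c₂* to C₂ and every vector of literal values β : C₁ → {0,1}, D at the assignment whose C₁-coordinates take value b(i) where β(i) = 1 and value 1 − b(i) where β(i) = 0, and which equals c₂* on C₂, equals 1 for ω* if and only if β ≡ 1; equivalently, for every assignment c, D_c(ω*) = 1 if and only if c satisfies B. -/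
/-!
If `D_c(ω) = 1` holds exactly for the assignments `c` satisfying `B`, then every sufficient
cause for `ω` is a restriction of `B` (otherwise flipping one coordinate produces an assignment
satisfying it but not `B`), so `B` is the only minimal one. Conversely, if `B` is the unique
minimal sufficient cause for `ω` and `D_c(ω) = 1`, the full assignment `c` is a sufficient cause;
by finiteness it restricts to a minimal one, which must be `B`, so `c` satisfies `B`.
-/

section Conjunctions

variable {ι : Type*}

theorem ConjExtends.refl (B : Conj ι) : ConjExtends B B := fun _ _ h => h

theorem ConjExtends.trans {B B' B'' : Conj ι} (h : ConjExtends B B')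
    (h' : ConjExtends B' B'') : ConjExtends B B'' := fun i v hi => h' i v (h i v hi)

theorem ConjExtends.antisymm {B B' : Conj ι} (h : ConjExtends B B')
    (h' : ConjExtends B' B) : B = B' := by
  funext i
  cases hB : B i with
  | some v => exact (h i v hB).symm
  | none =>
    cases hB' : B' i with
    | some v => simpa [hB] using h' i v hB'
    | none => rfl

def Conj.full (c : Assign ι) : Conj ι := fun i => some (c i)

theorem satisfies_full_iff {c c' : Assign ι} : Satisfies c' (Conj.full c) ↔ c' = c :=
  ⟨fun h => funext fun i => h i (c i) rfl, fun h i _ hi => by cases hi; rw [h]⟩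

theorem satisfies_iff_conjExtends_full {c : Assign ι} {B : Conj ι} :
    Satisfies c B ↔ ConjExtends B (Conj.full c) :=
  ⟨fun h i v hi => congrArg some (h i v hi), fun h i v hi => Option.some.inj (h i v hi)⟩

theorem satisfies_ite_iff [DecidableEq ι] (s : Finset ι) (b c : Assign ι) :
    Satisfies c (fun i => if i ∈ s then some (b i) else none) ↔ ∀ i ∈ s, c i = b i := by
  refine ⟨fun h i hi => h i (b i) (if_pos hi), fun h i v hi => ?_⟩
  dsimp only at hi
  split_ifs at hi with hs
  exact Option.some.inj hi ▸ h i hs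

end Conjunctions

section Causes

variable {ι Ω : Type*} (D : Ω → Assign ι → Bool) (ω : Ω)

theorem exists_minSuffCauseFor [Finite ι] {B : Conj ι} (hB : SuffCauseFor D B ω) :
    ∃ B₀, ConjExtends B₀ B ∧ MinSuffCauseFor D B₀ ω := by
  let r : Conj ι → Conj ι → Prop := fun B₁ B₂ => ConjExtends B₁ B₂ ∧ B₁ ≠ B₂
  have : IsTrans (Conj ι) r := ⟨fun _ _ _ h₁ h₂ =>
    ⟨h₁.1.trans h₂.1, fun h => h₁.2 (h₁.1.antisymm (h ▸ h₂.1))⟩⟩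
  have : Std.Irrefl r := ⟨fun _ h => h.2 rfl⟩
  obtain ⟨B₀, ⟨hB₀B, hB₀⟩, hmin⟩ := (Finite.wellFounded_of_trans_of_irrefl r).has_min
    {B' | ConjExtends B' B ∧ SuffCauseFor D B' ω} ⟨B, ConjExtends.refl B, hB⟩
  exact ⟨B₀, hB₀B, hB₀, fun B' hB'B₀ hne hB' => hmin B' ⟨hB'B₀.trans hB₀B, hB'⟩ ⟨hB'B₀, hne⟩⟩

theorem conjExtends_of_suffCauseFor {B B' : Conj ι}
    (hB : ∀ c, D ω c = true → Satisfies c B) (hB' : SuffCauseFor D B' ω) :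
    ConjExtends B B' := by
  classical
  intro i v hi
  by_contra hne
  let c : Assign ι := Function.update (fun j => (B' j).getD false) i (!v)
  have hc : Satisfies c B' := by
    intro j w hj
    by_cases hji : j = i
    · subst hji
      have hw : w ≠ v := fun h => hne (h ▸ hj)
      simp [c, Bool.eq_not.mpr hw.symm]
    · simp [c, hji, hj]
  have := hB c (hB' c hc) i v hi
  simp [c] at this

theorem singularFor_of_forall_iff_satisfies {B : Conj ι}
    (h : ∀ c, D ω c = true ↔ Satisfies c B) : SingularFor D B ω := by
  have hsuff : SuffCauseFor D B ω := fun c hc => (h c).mpr hc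
  have hext : ∀ B', SuffCauseFor D B' ω → ConjExtends B B' :=
    fun _ => conjExtends_of_suffCauseFor D ω fun c => (h c).mp
  refine ⟨⟨hsuff, fun B' hB'B hne hB' => hne (hB'B.antisymm (hext B' hB'))⟩, ?_⟩
  rintro B' hne ⟨hB', hmin⟩
  exact hmin B (hext B' hB') hne.symm hsuff

theorem satisfies_of_singularFor [Finite ι] {B : Conj ι} (h : SingularFor D B ω)
    {c : Assign ι} (hc : D ω c = true) : Satisfies c B := by
  have hfull : SuffCauseFor D (Conj.full c) ω := fun c' hc' => satisfies_full_iff.mp hc' ▸ hc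
  obtain ⟨B₀, hB₀c, hB₀⟩ := exists_minSuffCauseFor D ω hfull
  obtain rfl : B₀ = B := by_contra fun hne => h.2 B₀ hne hB₀
  exact satisfies_iff_conjExtends_full.mpr hB₀c

theorem singularFor_iff [Finite ι] {B : Conj ι} :
    SingularFor D B ω ↔ ∀ c, D ω c = true ↔ Satisfies c B :=
  ⟨fun h c => ⟨satisfies_of_singularFor D ω h, fun hc => h.1.1 c hc⟩,
    singularFor_of_forall_iff_satisfies D ω⟩

end Causes

/-- `β i` records whether `c i` satisfies the literal `b i`; conversely `β i = (c i == b i)`. -/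
theorem forall_iff_forall_literal_values {ι : Type*} [DecidableEq ι] (f : Assign ι → Bool)
    (s : Finset ι) (b : Assign ι) :
    (∀ c, f c = true ↔ ∀ i ∈ s, c i = b i) ↔
      ∀ (c₂ : ι → Bool) (β : ι → Bool),
        (f (fun i => if i ∈ s then (if β i then b i else !(b i)) else c₂ i) = true ↔
          ∀ i ∈ s, β i = true) := by
  refine ⟨fun h c₂ β => (h _).trans (forall₂_congr fun i hi => ?_), fun h c => ?_⟩
  · cases β i <;> simp [hi]
  · have hc : (fun i => if i ∈ s then (if (c i == b i) then b i else !(b i)) else c i) = c := by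
      funext i
      cases c i <;> cases b i <;> simp
    rw [← hc, h c (fun i => c i == b i), hc]
    simp

theorem singular_iff_general {ι Ω : Type*} [Fintype ι] [DecidableEq ι]
    (D : Ω → Assign ι → Bool) (C₁ : Finset ι)
    (b : ι → Bool) :
    Singular D (fun i => if i ∈ C₁ then some (b i) else none) ↔
      ∃ ω : Ω, ∀ (c₂ : ι → Bool) (β : ι → Bool),
        (D ω (fun i => if i ∈ C₁ then (if β i then b i else !(b i)) else c₂ i) = true ↔
          ∀ i ∈ C₁, β i = true) := by
  refine exists_congr fun ω => ?_
  rw [singularFor_iff, ← forall_iff_forall_literal_values]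
  simp only [satisfies_ite_iff]

/-- Theorem 5.1: characterization of singularity in terms of
potential outcomes. -/
theorem singular_iff {ι Ω : Type*} [Fintype ι] [DecidableEq ι] [Nonempty ι] [Nonempty Ω]
    (D : Ω → Assign ι → Bool) (C₁ C₂ : Finset ι)
    (hdisj : Disjoint C₁ C₂) (hunion : C₁ ∪ C₂ = Finset.univ)
    (b : ι → Bool) :
    Singular D (fun i => if i ∈ C₁ then some (b i) else none) ↔
      ∃ ω : Ω, ∀ (c₂ : ι → Bool) (β : ι → Bool),
        (D ω (fun i => if i ∈ C₁ then (if β i then b i else !(b i)) else c₂ i) = true ↔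
          ∀ i ∈ C₁, β i = true) :=
  singular_iff_general D C₁ b
end

section
/- If a conjunction of literals B is singular for D(C,Ω), then B is irreducible for D(C,Ω). -/
/-- Corollary 5.1: singularity implies irreducibility. -/
theorem irreducible_of_singular {ι Ω : Type*} [Fintype ι] [Nonempty ι] [Nonempty Ω]
    (D : Ω → Assign ι → Bool) (B : Conj ι)
    (h : Singular D B) : IrreducibleConj D B := by
  classical
  obtain ⟨ω, ⟨⟨hBsuff, _⟩, huniq⟩⟩ := h
  intro p A 𝔅 hrep
  set c : Assign ι := fun i => (B i).getD false with hc
  have hsat : Satisfies c B := by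
    intro i v hv; simp [hc, hv]
  obtain ⟨j, hAj, hcj⟩ := (hrep ω c).1 (hBsuff c hsat)
  refine ⟨j, ?_⟩
  have hjsuff : SuffCauseFor D (𝔅 j) ω := fun c' hc' =>
    (hrep ω c').2 ⟨j, hAj, hc'⟩
  let dcard : Conj ι → ℕ := fun B' => (Finset.univ.filter (fun i => (B' i).isSome)).card
  let P : ℕ → Prop := fun n => ∃ B', ConjExtends B' (𝔅 j) ∧ SuffCauseFor D B' ω ∧ dcard B' = n
  have hP : ∃ n, P n := ⟨dcard (𝔅 j), 𝔅 j, fun i v hv => hv, hjsuff, rfl⟩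
  obtain ⟨B'', hext, hsuff, hcard⟩ := Nat.find_spec hP
  have hmin : MinSuffCauseFor D B'' ω := by
    refine ⟨hsuff, ?_⟩
    intro B' hB' hne hsuff'
    have hext' : ConjExtends B' (𝔅 j) := fun i v hv => hext i v (hB' i v hv)
    have hsub : Finset.univ.filter (fun i => (B' i).isSome)
        ⊂ Finset.univ.filter (fun i => (B'' i).isSome) := by
      constructor
      · intro i hi
        simp only [Finset.mem_filter, Finset.mem_univ, true_and,
          Option.isSome_iff_exists] at hi ⊢
        obtain ⟨v, hv⟩ := hi
        exact ⟨v, hB' i v hv⟩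
      · intro hcontra
        apply hne
        funext i
        cases hv : B' i with
        | some v => exact ((hB' i v hv).symm)
        | none =>
          cases hv2 : B'' i with
          | none => rfl
          | some v' =>
            exfalso
            have hi : i ∈ Finset.univ.filter (fun i => (B'' i).isSome) := by
              simp [hv2]
            have := hcontra hi
            simp [hv] at this
    have hlt : dcard B' < dcard B'' := Finset.card_lt_card hsub
    have hle : Nat.find hP ≤ dcard B' := Nat.find_min' hP ⟨B', hext', hsuff', rfl⟩
    omega
  have hBB : B'' = B := by
    by_contra hne
    exact huniq B'' hne hmin
  intro i v hv
  exact hext i v (hBB ▸ hv)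
end

section
/- Suppose Ω is a nonempty finite set equipped with a probability mass function P satisfying P(ω) > 0 for every ω ∈ Ω, and let B be a conjunction of literals with domain all of C (|B| = |C|) and target values b : C → {0,1}. Define PNS(D,B) := P({ω : D at the target assignment b equals 1, and D at every assignment c ≠ b equals 0}). Then PNS(D,B) > 0 if and only if B is singular for D(C,Ω). -/
section Aux

variable {ι Ω : Type*}

lemma satisfies_full_iff_s18 {c : Assign ι} {b : ι → Bool} :
    Satisfies c (fun i => some (b i)) ↔ c = b := by
  constructor
  · intro h; funext i; exact h i (b i) rfl
  · rintro rfl i v hv; exact Option.some_injective _ hv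

lemma conjExtends_trans {A B C : Conj ι} (h1 : ConjExtends A B) (h2 : ConjExtends B C) :
    ConjExtends A C := fun i v hv => h2 i v (h1 i v hv)

lemma card_lt_of_extends [Fintype ι] {B' B : Conj ι} (h : ConjExtends B' B) (hne : B' ≠ B) :
    (Finset.univ.filter (fun i => (B' i).isSome)).card <
      (Finset.univ.filter (fun i => (B i).isSome)).card := by
  obtain ⟨i, hi⟩ : ∃ i, B' i ≠ B i := by
    by_contra hc; push_neg at hc; exact hne (funext hc)
  have hBi' : B' i = none := by
    cases hv : B' i with
    | none => rfl
    | some v => exact absurd (hv.trans (h i v hv).symm) hi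
  have hBi : (B i).isSome := by
    cases hv : B i with
    | none => exact absurd (hBi'.trans hv.symm) hi
    | some v => rfl
  apply Finset.card_lt_card
  constructor
  · intro j hj
    simp only [Finset.mem_filter, Finset.mem_univ, true_and] at hj ⊢
    obtain ⟨v, hv⟩ := Option.isSome_iff_exists.mp hj
    rw [h j v hv]; rfl
  · intro hsub
    have := hsub (Finset.mem_filter.mpr ⟨Finset.mem_univ i, hBi⟩)
    simp only [Finset.mem_filter, hBi'] at this
    exact absurd this.2 (by simp)

/-- Existence of a minimal sufficient cause below a given sufficient cause. -/
lemma exists_minSuff [Fintype ι] (D : Ω → Assign ι → Bool) (ω : Ω) (C0 : Conj ι) :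
    ∀ n (B : Conj ι), (Finset.univ.filter (fun i => (B i).isSome)).card ≤ n →
      ConjExtends B C0 → SuffCauseFor D B ω →
      ∃ B', ConjExtends B' C0 ∧ MinSuffCauseFor D B' ω := by
  intro n
  induction n with
  | zero =>
    intro B hcard hext hsuff
    refine ⟨B, hext, hsuff, ?_⟩
    intro B' hext' hne _
    exact absurd (Nat.lt_of_lt_of_le (card_lt_of_extends hext' hne) hcard) (Nat.not_lt_zero _)
  | succ n ih =>
    intro B hcard hext hsuff
    by_cases hmin : ∀ B' : Conj ι, ConjExtends B' B → B' ≠ B → ¬ SuffCauseFor D B' ω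
    · exact ⟨B, hext, hsuff, hmin⟩
    · push_neg at hmin
      obtain ⟨B', hext', hne, hsuff'⟩ := hmin
      exact ih B' (Nat.le_of_lt_succ (Nat.lt_of_lt_of_le (card_lt_of_extends hext' hne) hcard))
        (conjExtends_trans hext' hext) hsuff'

lemma key_iff [Fintype ι] (D : Ω → Assign ι → Bool) (b : ι → Bool) (ω : Ω) :
    (D ω b = true ∧ ∀ c : Assign ι, c ≠ b → D ω c = false) ↔
      SingularFor D (fun i => some (b i)) ω := by
  classical
  constructor
  · rintro ⟨hb, hrest⟩
    have hsuff : SuffCauseFor D (fun i => some (b i)) ω := by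
      intro c hc; rw [satisfies_full_iff_s18.mp hc]; exact hb
    have hmin : MinSuffCauseFor D (fun i => some (b i)) ω := by
      refine ⟨hsuff, ?_⟩
      intro B' hext hne hsuff'
      obtain ⟨i, hi⟩ : ∃ i, B' i ≠ some (b i) := by
        by_contra hc; push_neg at hc; exact hne (funext hc)
      have hBi' : B' i = none := by
        cases hv : B' i with
        | none => rfl
        | some v =>
          have := hext i v hv
          exact absurd (hv.trans (Option.some_injective _ this ▸ rfl)) hi
      set c := Function.update b i (!(b i)) with hc
      have hcsat : Satisfies c B' := by
        intro j v hv
        by_cases hji : j = i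
        · subst hji; rw [hBi'] at hv; exact absurd hv (by simp)
        · have := Option.some_injective _ (hext j v hv)
          rw [hc, Function.update_of_ne hji, ← this]
      have hcne : c ≠ b := by
        intro h
        have : c i = b i := by rw [h]
        rw [hc, Function.update_self] at this
        simp at this
      have := hsuff' c hcsat
      rw [hrest c hcne] at this; exact absurd this (by simp)
    refine ⟨hmin, ?_⟩
    intro B' hne hmin'
    apply absurd hmin'.1
    by_cases hfull : ∀ i, (B' i).isSome
    · -- B' has full domain: the unique satisfying assignment is b' ≠ b
      set b' : Assign ι := fun i => (B' i).getD true with hb'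
      have hB'eq : ∀ i, B' i = some (b' i) := by
        intro i
        obtain ⟨v, hv⟩ := Option.isSome_iff_exists.mp (hfull i)
        rw [hv, hb']; simp [hv]
      have hb'ne : b' ≠ b := by
        intro h
        apply hne; funext i; rw [hB'eq i, h]
      intro hsuff'
      have hsat : Satisfies b' B' := by intro i v hv; rw [hB'eq i] at hv; exact Option.some_injective _ hv
      have := hsuff' b' hsat
      rw [hrest b' hb'ne] at this; exact absurd this (by simp)
    · -- B' has a none coordinate: two distinct satisfying assignments, not both b
      push_neg at hfull
      obtain ⟨i, hi⟩ := hfull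
      have hBi' : B' i = none := Option.not_isSome_iff_eq_none.mp hi
      intro hsuff'
      set c0 : Assign ι := fun j => (B' j).getD (b j) with hc0
      have hsat0 : Satisfies c0 B' := by
        intro j v hv; rw [hc0]; simp [hv]
      set c1 := Function.update c0 i (!(c0 i)) with hc1
      have hsat1 : Satisfies c1 B' := by
        intro j v hv
        by_cases hji : j = i
        · subst hji; rw [hBi'] at hv; exact absurd hv (by simp)
        · rw [hc1, Function.update_of_ne hji]; exact hsat0 j v hv
      have hne01 : c0 i ≠ c1 i := by
        rw [hc1, Function.update_self]; simp
      have : c0 ≠ b ∨ c1 ≠ b := by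
        by_contra h
        push_neg at h
        exact hne01 (by rw [h.1, h.2])
      rcases this with h | h
      · have := hsuff' c0 hsat0
        rw [hrest c0 h] at this; exact absurd this (by simp)
      · have := hsuff' c1 hsat1
        rw [hrest c1 h] at this; exact absurd this (by simp)
  · rintro ⟨⟨hsuff, _⟩, huniq⟩
    constructor
    · exact hsuff b (satisfies_full_iff_s18.mpr rfl)
    · intro c hcne
      by_contra hc
      have hDc : D ω c = true := by
        cases h : D ω c with
        | false => exact absurd h hc
        | true => rfl
      -- full conjunction at c is sufficient; extract a minimal one; it must equal B
      set C0 : Conj ι := fun i => some (c i) with hC0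
      have hsuffC0 : SuffCauseFor D C0 ω := by
        intro c' hc'; rw [satisfies_full_iff_s18.mp hc']; exact hDc
      obtain ⟨B', hext', hmin'⟩ := exists_minSuff D ω C0
        (Finset.univ.filter (fun i => (C0 i).isSome)).card C0 le_rfl
        (fun i v hv => hv) hsuffC0
      have hB'eq : B' = fun i => some (b i) := by
        by_contra hne
        exact huniq B' hne hmin'
      have : c = b := by
        funext i
        have := hext' i (b i) (by rw [hB'eq])
        exact Option.some_injective _ this
      exact hcne this

end Aux

/-- Proposition 5.2: for a finite population with everywhere
positive probability mass, `PNS(D, B) > 0` iff `B` is singular, for a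
full-domain conjunction `B`. -/
theorem pns_pos_iff_singular {ι Ω : Type*} [Fintype ι] [DecidableEq ι] [Nonempty ι]
    [Fintype Ω] [Nonempty Ω]
    (P : Ω → ℝ) (hpos : ∀ ω : Ω, 0 < P ω) (hsum : ∑ ω : Ω, P ω = 1)
    (D : Ω → Assign ι → Bool) (b : ι → Bool) :
    (0 < ∑ ω ∈ Finset.univ.filter
        (fun ω : Ω => D ω b = true ∧ ∀ c : Assign ι, c ≠ b → D ω c = false), P ω) ↔
      Singular D (fun i => some (b i)) := by
  classical
  have hiff : (0 < ∑ ω ∈ Finset.univ.filter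
        (fun ω : Ω => D ω b = true ∧ ∀ c : Assign ι, c ≠ b → D ω c = false), P ω) ↔
      (Finset.univ.filter
        (fun ω : Ω => D ω b = true ∧ ∀ c : Assign ι, c ≠ b → D ω c = false)).Nonempty := by
    constructor
    · intro hlt
      by_contra h
      rw [Finset.not_nonempty_iff_eq_empty.mp h] at hlt
      simp at hlt
    · intro hne
      exact Finset.sum_pos (fun ω _ => hpos ω) hne
  rw [hiff]
  · constructor
    · rintro ⟨ω, hω⟩
      simp only [Finset.mem_filter, Finset.mem_univ, true_and] at hω
      exact ⟨ω, (key_iff D b ω).mp hω⟩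
    · rintro ⟨ω, hω⟩
      refine ⟨ω, ?_⟩
      simp only [Finset.mem_filter, Finset.mem_univ, true_and]
      exact (key_iff D b ω).mpr hω
end

section
/- Suppose Ω carries a probability measure P, measurable potential outcomes ω ↦ D_c(ω) for each assignment c : C → {0,1}, a measurable observed exposure map ω ↦ C(ω), and observed outcome D(ω) := D_{C(ω)}(ω) (consistency). Let B be a conjunction of literals with domain all of C (|B| = |C|) and target assignment b : C → {0,1}, and suppose the exposures are unconfounded for D: for every pair of assignments c, c′ with P(C = c′) > 0, P(D_c = 1 | C = c′) = P(D_c = 1). Then PNS(D,B) := P({ω : D_b(ω) = 1 and D_c(ω) = 0 for every c ≠ b}) satisfies PNS(D,B) ≥ E[D | C = b] − Σ_{c ≠ b} E[D | C = c], where each conditioning event is assumed to have positive probability and E[D | E] = P(D = 1 | E). -/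
open MeasureTheory ProbabilityTheory

/-! By consistency and unconfoundedness, `E[D | C = c] = P(D_c = 1)` for every `c`. The PNS event
is `{D_b = 1}` minus the union of the events `{D_c = 1}` over `c ≠ b`, so the union bound gives
`PNS ≥ P(D_b = 1) - ∑_{c ≠ b} P(D_c = 1)`. -/

theorem measureReal_sub_sum_le_measureReal_sdiff_biUnion {Ω α : Type*} [MeasurableSpace Ω]
    (μ : Measure Ω) [IsFiniteMeasure μ] (t : Set Ω) (s : Finset α) (E : α → Set Ω) :
    μ.real t - ∑ i ∈ s, μ.real (E i) ≤ μ.real (t \ ⋃ i ∈ s, E i) :=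
  (sub_le_sub_left (measureReal_biUnion_finset_le s E) _).trans
    (le_measureReal_sdiff (measure_ne_top _ _))

theorem cond_setOf_eval_self {Ω α : Type*} [MeasurableSpace Ω] (μ : Measure Ω)
    {X : Ω → α} {a : α} (hX : MeasurableSet {ω | X ω = a}) (Y : Ω → α → Bool) :
    μ[{ω | Y ω (X ω) = true} | {ω | X ω = a}] = μ[{ω | Y ω a = true} | {ω | X ω = a}] := by
  rw [← cond_inter_self hX, ← cond_inter_self hX {ω | Y ω a = true}]
  congr 1
  ext ω
  exact and_congr_right fun h => h ▸ Iff.rfl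

theorem pns_lower_bound_general {ι Ω : Type*} [Fintype ι] [DecidableEq ι]
    [MeasurableSpace Ω]
    (P : Measure Ω) [IsProbabilityMeasure P]
    (D : Ω → Assign ι → Bool) (Cobs : Ω → Assign ι)
    (hC : Measurable Cobs)
    (b : Assign ι)
    (hunconf : ∀ c c' : Assign ι, P {ω | Cobs ω = c'} ≠ 0 →
      (ProbabilityTheory.cond P {ω | Cobs ω = c'}) {ω | D ω c = true}
        = P {ω | D ω c = true})
    (hpos : ∀ c : Assign ι, P {ω | Cobs ω = c} ≠ 0) :
    ((ProbabilityTheory.cond P {ω | Cobs ω = b}) {ω | D ω (Cobs ω) = true}).toReal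
      - ∑ c ∈ Finset.univ.filter (fun c : Assign ι => c ≠ b),
          ((ProbabilityTheory.cond P {ω | Cobs ω = c}) {ω | D ω (Cobs ω) = true}).toReal
      ≤ (P {ω | D ω b = true ∧ ∀ c : Assign ι, c ≠ b → D ω c = false}).toReal := by
  have hobserved : ∀ c : Assign ι,
      (P[{ω | D ω (Cobs ω) = true} | {ω | Cobs ω = c}]).toReal = P.real {ω | D ω c = true} :=
    fun c => by
      rw [cond_setOf_eval_self P (hC (measurableSet_singleton c)), hunconf c c (hpos c)]
      rfl
  have hpns : {ω | D ω b = true ∧ ∀ c : Assign ι, c ≠ b → D ω c = false}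
      = {ω | D ω b = true} \ ⋃ c ∈ Finset.univ.filter (· ≠ b), {ω | D ω c = true} := by
    ext ω
    simp
  simp only [hobserved, hpns]
  exact measureReal_sub_sum_le_measureReal_sdiff_biUnion P _ _ _

/-- Proposition 5.4: lower bound on the probability of necessity
and sufficiency under no confounding. -/
theorem pns_lower_bound {ι Ω : Type*} [Fintype ι] [DecidableEq ι] [Nonempty ι]
    [MeasurableSpace Ω]
    (P : Measure Ω) [IsProbabilityMeasure P]
    (D : Ω → Assign ι → Bool) (Cobs : Ω → Assign ι)
    (hD : ∀ c : Assign ι, Measurable fun ω => D ω c)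
    (hC : Measurable Cobs)
    (b : Assign ι)
    (hunconf : ∀ c c' : Assign ι, P {ω | Cobs ω = c'} ≠ 0 →
      (ProbabilityTheory.cond P {ω | Cobs ω = c'}) {ω | D ω c = true}
        = P {ω | D ω c = true})
    (hpos : ∀ c : Assign ι, P {ω | Cobs ω = c} ≠ 0) :
    ((ProbabilityTheory.cond P {ω | Cobs ω = b}) {ω | D ω (Cobs ω) = true}).toReal
      - ∑ c ∈ Finset.univ.filter (fun c : Assign ι => c ≠ b),
          ((ProbabilityTheory.cond P {ω | Cobs ω = c}) {ω | D ω (Cobs ω) = true}).toReal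
      ≤ (P {ω | D ω b = true ∧ ∀ c : Assign ι, c ≠ b → D ω c = false}).toReal :=
  pns_lower_bound_general P D Cobs hC b hunconf hpos
end
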